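/- arXiv:1312.5472 — 8 statements merged into one kernel-verified Lean document; each statement's English description precedes it below -/
import Mathlib

section
/- Assume 𝔽 has at least r elements. For every m ∈ ℕ^r, one has m ∈ Γ if and only if the 𝔽-dimension of the quotient L(m)/L(m − ε_i) equals 1 for every i ∈ {1, …, r} (equivalently, L(m − ε_i) ≠ L(m) for every i). -/
/-- A normalized discrete valuation on `K`, trivial on `𝔽` and with residue field `𝔽`. -/
structure IsDVal (𝔽 K : Type*) [Field 𝔽] [Field K] [Algebra 𝔽 K] (v : K → WithTop ℤ) : Prop where
  map_zero' : v 0 = ⊤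
  map_mul' : ∀ f g : K, v (f * g) = v f + v g
  add_ge : ∀ f g : K, min (v f) (v g) ≤ v (f + g)
  ne_top : ∀ f : K, f ≠ 0 → v f ≠ ⊤
  exists_val : ∀ n : ℤ, ∃ f : K, v f = (n : WithTop ℤ)
  trivial_on : ∀ a : 𝔽, a ≠ 0 → v (algebraMap 𝔽 K a) = 0
  residue : ∀ f : K, 0 ≤ v f → ∃ a : 𝔽, 0 < v (f - algebraMap 𝔽 K a)

/-- The ring `A` of functions regular outside `P₁, …, P_r`. -/
def regA {K : Type*} [Field K] (S : Set (K → WithTop ℤ)) : Set K :=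
  {f : K | ∀ w ∈ S, 0 ≤ w f}

/-- The Riemann–Roch space `L(m) = {f ∈ A : v i f ≥ -(m i) for all i}`. -/
def LL (𝔽 : Type*) {K : Type*} [Field 𝔽] [Field K] [Algebra 𝔽 K] {r : ℕ}
    (v : Fin r → K → WithTop ℤ) (hv : ∀ i, IsDVal 𝔽 K (v i))
    (S : Set (K → WithTop ℤ)) (hS : ∀ w ∈ S, IsDVal 𝔽 K w)
    (m : Fin r → ℤ) : Submodule 𝔽 K where
  carrier := {f : K | f ∈ regA S ∧ ∀ i, ((-(m i) : ℤ) : WithTop ℤ) ≤ v i f}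
  zero_mem' := by
    refine ⟨fun w hw => ?_, fun i => ?_⟩
    · rw [(hS w hw).map_zero']; exact le_top
    · rw [(hv i).map_zero']; exact le_top
  add_mem' := by
    rintro f g ⟨hf1, hf2⟩ ⟨hg1, hg2⟩
    refine ⟨fun w hw => ?_, fun i => ?_⟩
    · exact le_trans (le_min (hf1 w hw) (hg1 w hw)) ((hS w hw).add_ge f g)
    · exact le_trans (le_min (hf2 i) (hg2 i)) ((hv i).add_ge f g)
  smul_mem' := by
    rintro c f ⟨h1, h2⟩
    by_cases hc : c = 0
    · subst hc
      rw [zero_smul]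
      refine ⟨fun w hw => ?_, fun i => ?_⟩
      · rw [(hS w hw).map_zero']; exact le_top
      · rw [(hv i).map_zero']; exact le_top
    · rw [Algebra.smul_def c f]
      refine ⟨fun w hw => ?_, fun i => ?_⟩
      · rw [(hS w hw).map_mul', (hS w hw).trivial_on c hc, zero_add]
        exact h1 w hw
      · rw [(hv i).map_mul', (hv i).trivial_on c hc, zero_add]
        exact h2 i

/-- The Weierstraß semigroup `Γ` of `P₁, …, P_r`. -/
def Gamma {K : Type*} [Field K] {r : ℕ} (v : Fin r → K → WithTop ℤ)
    (S : Set (K → WithTop ℤ)) : Set (Fin r → ℕ) :=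
  {m | ∃ f : K, f ≠ 0 ∧ f ∈ regA S ∧ ∀ i, v i f = ((-(m i : ℤ) : ℤ) : WithTop ℤ)}

/-- The Weierstraß semigroup `Γ_{P_i}` of the single point `P_i`. -/
def GammaP {K : Type*} [Field K] {r : ℕ} (v : Fin r → K → WithTop ℤ)
    (S : Set (K → WithTop ℤ)) (i : Fin r) : Set ℕ :=
  {k | ∃ f : K, f ≠ 0 ∧ f ∈ regA S ∧ v i f = ((-(k : ℤ) : ℤ) : WithTop ℤ) ∧
        ∀ j, j ≠ i → 0 ≤ v j f}


section Aux

open Cardinal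

/-- A vector space over a field with at least `n` elements is not the union of
`n` proper subspaces. -/
theorem exists_not_mem_of_card_le (𝔽 V : Type*) [Field 𝔽] [AddCommGroup V] [Module 𝔽 V] :
    ∀ (n : ℕ) (W : Fin n → Submodule 𝔽 V), (∀ j, W j ≠ ⊤) →
      ((n : Cardinal) ≤ Cardinal.mk 𝔽) → ∃ x : V, ∀ j, x ∉ W j := by
  intro n
  induction n with
  | zero => exact fun W _ _ => ⟨0, fun j => j.elim0⟩
  | succ k ih =>
    intro W hW hcard
    by_contra hcon
    push_neg at hcon
    by_cases hA : ∃ j₀ : Fin (k+1), ∀ x ∈ W j₀, ∃ j, j ≠ j₀ ∧ x ∈ W j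
    · obtain ⟨j₀, hj₀⟩ := hA
      obtain ⟨x, hx⟩ := ih (fun l => W (j₀.succAbove l)) (fun l => hW _)
        (le_trans (by exact_mod_cast Nat.le_succ k) hcard)
      obtain ⟨j, hj⟩ := hcon x
      by_cases hjj : j = j₀
      · subst hjj
        obtain ⟨j', hj'ne, hj'⟩ := hj₀ x hj
        obtain ⟨l, rfl⟩ := Fin.exists_succAbove_eq hj'ne
        exact hx l hj'
      · obtain ⟨l, rfl⟩ := Fin.exists_succAbove_eq hjj
        exact hx l hj
    · push_neg at hA
      obtain ⟨x, hxin, hxout⟩ := hA 0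
      have hy : ∃ y : V, y ∉ W 0 := by
        by_contra hy
        push_neg at hy
        exact hW 0 (Submodule.eq_top_iff'.mpr hy)
      obtain ⟨y, hy⟩ := hy
      have key : ∀ c : 𝔽, ∃ j : Fin (k+1), j ≠ 0 ∧ y + c • x ∈ W j := by
        intro c
        obtain ⟨j, hj⟩ := hcon (y + c • x)
        refine ⟨j, fun h0 => ?_, hj⟩
        rw [h0] at hj
        exact hy (by simpa using (W 0).sub_mem hj ((W 0).smul_mem c hxin))
      set g : 𝔽 → {j : Fin (k+1) // j ≠ 0} := fun c => ⟨(key c).choose, (key c).choose_spec.1⟩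
        with hg
      have hginj : Function.Injective g := by
        intro c c' hcc
        by_contra hne
        have h1 := (key c).choose_spec.2
        have h2 := (key c').choose_spec.2
        have hjeq : (key c).choose = (key c').choose := congrArg Subtype.val hcc
        rw [← hjeq] at h2
        have hsub : (c - c') • x ∈ W (key c).choose := by
          have := (W (key c).choose).sub_mem h1 h2
          simpa [sub_smul] using this
        have hxmem : x ∈ W (key c).choose := by
          have := (W (key c).choose).smul_mem (c - c')⁻¹ hsub
          rwa [smul_smul, inv_mul_cancel₀ (sub_ne_zero.mpr hne), one_smul] at this
        exact hxout _ (key c).choose_spec.1 hxmem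
      letI : Fintype 𝔽 := Fintype.ofInjective g hginj
      have hsub : Fintype.card {j : Fin (k+1) // j ≠ 0} = k := by
        rw [Fintype.card_subtype_compl]
        simp
      have hcard𝔽 : Fintype.card 𝔽 ≤ k := by
        have := Fintype.card_le_of_injective g hginj
        rwa [hsub] at this
      have h1 : ((k+1 : ℕ) : Cardinal) ≤ ((Fintype.card 𝔽 : ℕ) : Cardinal) := by
        rw [← Cardinal.mk_fintype]
        exact_mod_cast hcard
      have h2 : (k+1 : ℕ) ≤ Fintype.card 𝔽 := by exact_mod_cast h1
      omega

variable {𝔽 K : Type*} [Field 𝔽] [Field K] [Algebra 𝔽 K] {r : ℕ}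
  {v : Fin r → K → WithTop ℤ} (hv : ∀ i, IsDVal 𝔽 K (v i))
  {S : Set (K → WithTop ℤ)} (hS : ∀ w ∈ S, IsDVal 𝔽 K w)

theorem IsDVal.val_one {v : K → WithTop ℤ} (h : IsDVal 𝔽 K v) : v 1 = 0 := by
  have := h.trivial_on 1 one_ne_zero
  simpa using this

theorem mem_LL_iff {m : Fin r → ℤ} {f : K} :
    f ∈ LL 𝔽 v hv S hS m ↔ f ∈ regA S ∧ ∀ i, ((-(m i) : ℤ) : WithTop ℤ) ≤ v i f :=
  Iff.rfl

theorem LL_sub_single_le (m : Fin r → ℤ) (i : Fin r) :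
    LL 𝔽 v hv S hS (m - Pi.single i 1) ≤ LL 𝔽 v hv S hS m := by
  rintro f ⟨h1, h2⟩
  refine ⟨h1, fun j => le_trans ?_ (h2 j)⟩
  rcases eq_or_ne j i with rfl | hne
  · simp only [Pi.sub_apply, Pi.single_eq_same]
    exact_mod_cast by omega
  · simp [Pi.sub_apply, Pi.single_eq_of_ne hne]

/-- For `f ∈ L(m)`, membership in `L(m - εᵢ)` is just the sharpened condition at `i`. -/
theorem mem_LL_sub_single_iff {m : Fin r → ℤ} {i : Fin r} {f : K}
    (hf : f ∈ LL 𝔽 v hv S hS m) :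
    f ∈ LL 𝔽 v hv S hS (m - Pi.single i 1) ↔ ((-(m i) + 1 : ℤ) : WithTop ℤ) ≤ v i f := by
  obtain ⟨hf1, hf2⟩ := hf
  constructor
  · rintro ⟨-, h2⟩
    have := h2 i
    simpa [Pi.sub_apply, Pi.single_eq_same, neg_sub, sub_eq_add_neg, add_comm] using this
  · intro h
    refine ⟨hf1, fun j => ?_⟩
    rcases eq_or_ne j i with rfl | hne
    · simpa [Pi.sub_apply, Pi.single_eq_same, neg_sub, sub_eq_add_neg, add_comm] using h
    · simpa [Pi.sub_apply, Pi.single_eq_of_ne hne] using hf2 j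

/-- `f ∈ L(m) \ L(m - εᵢ)` has exact valuation `-mᵢ` at `i`. -/
theorem val_eq_of_mem_not_mem {m : Fin r → ℤ} {i : Fin r} {f : K}
    (hf : f ∈ LL 𝔽 v hv S hS m) (hnf : f ∉ LL 𝔽 v hv S hS (m - Pi.single i 1)) :
    v i f = ((-(m i) : ℤ) : WithTop ℤ) := by
  have h1 := hf.2 i
  have h2 : ¬ ((-(m i) + 1 : ℤ) : WithTop ℤ) ≤ v i f := by
    intro h
    exact hnf ((mem_LL_sub_single_iff hv hS hf).mpr h)
  by_cases htop : v i f = ⊤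
  · exact absurd (htop ▸ le_top) h2
  · obtain ⟨z, hz⟩ := WithTop.ne_top_iff_exists.mp htop
    rw [← hz] at h1 h2 ⊢
    rw [WithTop.coe_le_coe] at h1
    have h2' : ¬ (-(m i) + 1 ≤ z) := fun h => h2 (WithTop.coe_le_coe.mpr h)
    exact WithTop.coe_inj.mpr (by omega)

/-- Residue argument: two elements of `L(m)` with exact valuation `-mᵢ` at `i`
are proportional modulo `L(m - εᵢ)`. -/
theorem exists_smul_sub_mem {m : Fin r → ℤ} {i : Fin r} {f g : K}
    (hf : f ∈ LL 𝔽 v hv S hS m) (hg : g ∈ LL 𝔽 v hv S hS m)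
    (hvf : v i f = ((-(m i) : ℤ) : WithTop ℤ)) (hvg : v i g = ((-(m i) : ℤ) : WithTop ℤ)) :
    ∃ a : 𝔽, a ≠ 0 ∧ g - a • f ∈ LL 𝔽 v hv S hS (m - Pi.single i 1) := by
  have hf0 : f ≠ 0 := by
    intro h
    rw [h, (hv i).map_zero'] at hvf
    exact (WithTop.coe_ne_top hvf.symm).elim
  -- value of f⁻¹
  have hfinv0 : f⁻¹ ≠ 0 := inv_ne_zero hf0
  have hmul : v i (f * f⁻¹) = v i f + v i f⁻¹ := (hv i).map_mul' f f⁻¹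
  rw [mul_inv_cancel₀ hf0, (hv i).val_one, hvf] at hmul
  have hvfi : v i f⁻¹ = ((m i : ℤ) : WithTop ℤ) := by
    obtain ⟨z, hz⟩ := WithTop.ne_top_iff_exists.mp ((hv i).ne_top f⁻¹ hfinv0)
    rw [← hz] at hmul ⊢
    rw [← WithTop.coe_add] at hmul
    have : (0 : ℤ) = -(m i) + z := by exact_mod_cast hmul
    exact WithTop.coe_inj.mpr (by omega)
  -- the quotient h = g * f⁻¹ has valuation 0
  have hvh : v i (g * f⁻¹) = 0 := by
    rw [(hv i).map_mul' g f⁻¹, hvg, hvfi, ← WithTop.coe_add]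
    norm_num
  obtain ⟨a, ha⟩ := (hv i).residue (g * f⁻¹) (le_of_eq hvh.symm)
  have ha0 : a ≠ 0 := by
    intro h
    rw [h, map_zero, sub_zero, hvh] at ha
    exact lt_irrefl _ ha
  refine ⟨a, ha0, ?_⟩
  have hgaf : g - a • f = (g * f⁻¹ - algebraMap 𝔽 K a) * f := by
    rw [Algebra.smul_def, sub_mul, inv_mul_cancel_right₀ hf0]
  have hmem : g - a • f ∈ LL 𝔽 v hv S hS m :=
    (LL 𝔽 v hv S hS m).sub_mem hg ((LL 𝔽 v hv S hS m).smul_mem a hf)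
  rw [mem_LL_sub_single_iff hv hS hmem]
  rw [hgaf, (hv i).map_mul' _ f, hvf]
  have hge1 : ((1 : ℤ) : WithTop ℤ) ≤ v i (g * f⁻¹ - algebraMap 𝔽 K a) := by
    by_cases htop : v i (g * f⁻¹ - algebraMap 𝔽 K a) = ⊤
    · rw [htop]; exact le_top
    · obtain ⟨z, hz⟩ := WithTop.ne_top_iff_exists.mp htop
      rw [← hz] at ha ⊢
      rw [WithTop.coe_le_coe]
      have : (0 : ℤ) < z := by exact_mod_cast ha
      omega
  calc ((-(m i) + 1 : ℤ) : WithTop ℤ) = ((1 : ℤ) : WithTop ℤ) + ((-(m i) : ℤ) : WithTop ℤ) := by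
        rw [← WithTop.coe_add]; congr 1; omega
    _ ≤ v i (g * f⁻¹ - algebraMap 𝔽 K a) + ((-(m i) : ℤ) : WithTop ℤ) := by
        exact add_le_add_left hge1 _

end Aux

theorem mem_gamma_iff_dim_quotients_eq_one (𝔽 K : Type*) [Field 𝔽] [Field K] [Algebra 𝔽 K] (r : ℕ) (hr : 1 ≤ r)
    (v : Fin r → K → WithTop ℤ) (hv : ∀ i, IsDVal 𝔽 K (v i))
    (hvd : ∀ i j : Fin r, i ≠ j → v i ≠ v j)
    (S : Set (K → WithTop ℤ)) (hS : ∀ w ∈ S, IsDVal 𝔽 K w)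
    (hSv : ∀ w ∈ S, ∀ i, w ≠ v i)
    (hcard : (r : Cardinal) ≤ Cardinal.mk 𝔽) :
    ∀ m : Fin r → ℕ,
      (m ∈ Gamma v S ↔
        ∀ i : Fin r, Module.rank 𝔽
          (↥(LL 𝔽 v hv S hS (fun j => (m j : ℤ))) ⧸
            Submodule.comap (LL 𝔽 v hv S hS (fun j => (m j : ℤ))).subtype
              (LL 𝔽 v hv S hS ((fun j => (m j : ℤ)) - Pi.single i 1))) = 1) ∧
      (m ∈ Gamma v S ↔
        ∀ i : Fin r,
          LL 𝔽 v hv S hS ((fun j => (m j : ℤ)) - Pi.single i 1) ≠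
            LL 𝔽 v hv S hS (fun j => (m j : ℤ))) := by
  intro m
  set mz : Fin r → ℤ := fun j => (m j : ℤ) with hmz
  have hNeM : ∀ i : Fin r, LL 𝔽 v hv S hS (mz - Pi.single i 1) ≤ LL 𝔽 v hv S hS mz :=
    fun i => LL_sub_single_le hv hS mz i
  have keyiff : m ∈ Gamma v S ↔
      ∀ i, LL 𝔽 v hv S hS (mz - Pi.single i 1) ≠ LL 𝔽 v hv S hS mz := by
    constructor
    · rintro ⟨f, hf0, hfA, hfv⟩ i heq
      have hfM : f ∈ LL 𝔽 v hv S hS mz := ⟨hfA, fun j => le_of_eq (hfv j).symm⟩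
      have hfN : f ∉ LL 𝔽 v hv S hS (mz - Pi.single i 1) := by
        intro hmem
        have h1 := (mem_LL_sub_single_iff hv hS hfM).mp hmem
        rw [hfv i] at h1
        have h2 := WithTop.coe_le_coe.mp h1
        have h3 : mz i = (m i : ℤ) := rfl
        omega
      rw [heq] at hfN
      exact hfN hfM
    · intro hne
      have hW : ∀ i : Fin r, Submodule.comap (LL 𝔽 v hv S hS mz).subtype
          (LL 𝔽 v hv S hS (mz - Pi.single i 1)) ≠ ⊤ := by
        intro i h
        exact hne i (le_antisymm (hNeM i) (Submodule.comap_subtype_eq_top.mp h))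
      obtain ⟨x, hx⟩ := exists_not_mem_of_card_le 𝔽 (LL 𝔽 v hv S hS mz) r _ hW hcard
      have hxN : ∀ i, (x : K) ∉ LL 𝔽 v hv S hS (mz - Pi.single i 1) := by
        intro i h
        exact hx i (Submodule.mem_comap.mpr h)
      have hx0 : (x : K) ≠ 0 := by
        intro h0
        apply hxN ⟨0, hr⟩
        rw [h0]
        exact (LL 𝔽 v hv S hS (mz - Pi.single ⟨0, hr⟩ 1)).zero_mem
      exact ⟨(x : K), hx0, x.2.1, fun i => val_eq_of_mem_not_mem hv hS x.2 (hxN i)⟩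
  have rankiff : ∀ i : Fin r,
      (Module.rank 𝔽
        (↥(LL 𝔽 v hv S hS mz) ⧸
          Submodule.comap (LL 𝔽 v hv S hS mz).subtype
            (LL 𝔽 v hv S hS (mz - Pi.single i 1))) = 1 ↔
        LL 𝔽 v hv S hS (mz - Pi.single i 1) ≠ LL 𝔽 v hv S hS mz) := by
    intro i
    set N := LL 𝔽 v hv S hS (mz - Pi.single i 1)
    set M := LL 𝔽 v hv S hS mz
    set W := Submodule.comap M.subtype N with hWdef
    constructor
    · intro hrank heq
      have hWtop : W = ⊤ := Submodule.comap_subtype_eq_top.mpr (le_of_eq heq.symm)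
      have : Subsingleton (↥M ⧸ W) := Submodule.Quotient.subsingleton_iff.mpr hWtop
      rw [rank_subsingleton' 𝔽 (↥M ⧸ W)] at hrank
      exact zero_ne_one hrank
    · intro hne
      have hWne : W ≠ ⊤ := fun h =>
        hne (le_antisymm (hNeM i) (Submodule.comap_subtype_eq_top.mp h))
      have hlt : N < M := lt_of_le_of_ne (hNeM i) hne
      obtain ⟨f, hfM, hfN⟩ := SetLike.exists_of_lt hlt
      haveI : Nontrivial (↥M ⧸ W) :=
        Submodule.Quotient.nontrivial_iff.mpr (lt_top_iff_ne_top.mpr hWne).ne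
      have hub : Module.rank 𝔽 (↥M ⧸ W) ≤ 1 := by
        rw [rank_le_one_iff]
        refine ⟨Submodule.Quotient.mk ⟨f, hfM⟩, fun q => ?_⟩
        obtain ⟨g, rfl⟩ := Submodule.Quotient.mk_surjective W q
        by_cases hgN : (g : K) ∈ N
        · refine ⟨0, ?_⟩
          rw [zero_smul]
          exact ((Submodule.Quotient.mk_eq_zero W).mpr (Submodule.mem_comap.mpr hgN)).symm
        · have hvf := val_eq_of_mem_not_mem hv hS hfM hfN
          have hvg := val_eq_of_mem_not_mem hv hS g.2 hgN
          obtain ⟨a, ha0, hsub⟩ := exists_smul_sub_mem hv hS hfM g.2 hvf hvg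
          refine ⟨a, ?_⟩
          rw [← Submodule.Quotient.mk_smul, Submodule.Quotient.eq]
          refine Submodule.mem_comap.mpr ?_
          have h4 : (M.subtype (a • (⟨f, hfM⟩ : ↥M) - g)) = a • f - (g : K) := by
            simp
          rw [h4, ← neg_sub ((g : K)) (a • f)]
          exact N.neg_mem hsub
      have hlb : (1 : Cardinal) ≤ Module.rank 𝔽 (↥M ⧸ W) :=
        Cardinal.one_le_iff_pos.mpr rank_pos
      exact le_antisymm hub hlb
  exact ⟨keyiff.trans (forall_congr' fun i => (rankiff i).symm), keyiff⟩
end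

section
/- Assume 𝔽 has at least r elements. For every m ∈ ℕ^r, one has m ∈ Γ if and only if ∇_i(m) ≠ ∅ for every i ∈ {1, …, r}. -/
/-- `∇_i(m) = {n ∈ Γ : n i = m i and n j ≤ m j for j ≠ i}`. -/
def nabla {K : Type*} [Field K] {r : ℕ} (v : Fin r → K → WithTop ℤ)
    (S : Set (K → WithTop ℤ)) (i : Fin r) (m : Fin r → ℕ) : Set (Fin r → ℕ) :=
  {n | n ∈ Gamma v S ∧ n i = m i ∧ ∀ j, j ≠ i → n j ≤ m j}


/-- A vector space over a field with at least `k` elements cannot be covered by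
`k` proper subspaces. -/
lemma avoid_subspaces {𝔽 V : Type*} [Field 𝔽] [AddCommGroup V] [Module 𝔽 V]
    (k : ℕ) (hk : (k : Cardinal) ≤ Cardinal.mk 𝔽)
    (W : Fin k → Submodule 𝔽 V) (hW : ∀ i, W i ≠ ⊤) :
    ∃ x : V, ∀ i, x ∉ W i := by
  induction k with
  | zero => exact ⟨0, fun i => i.elim0⟩
  | succ k ih =>
    have hk' : (k : Cardinal) ≤ Cardinal.mk 𝔽 :=
      le_trans (by exact_mod_cast Nat.cast_le.mpr (Nat.le_succ k)) hk
    obtain ⟨u, hu⟩ := ih hk' (fun i => W i.castSucc) (fun i => hW _)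
    by_cases hul : u ∉ W (Fin.last k)
    · refine ⟨u, fun i => ?_⟩
      refine Fin.lastCases (motive := fun i => u ∉ W i) hul hu i
    · push_neg at hul
      have hwex : ∃ w, w ∉ W (Fin.last k) := by
        by_contra h
        push_neg at h
        exact hW _ (Submodule.eq_top_iff'.mpr h)
      obtain ⟨w, hw⟩ := hwex
      by_contra hc
      push_neg at hc
      choose φ0 hφ0 using hc
      set φ : 𝔽 → Fin (k+1) := fun c => φ0 (w + c • u) with hφdef
      have hφ : ∀ c : 𝔽, w + c • u ∈ W (φ c) := fun c => hφ0 _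
      have hne : ∀ c : 𝔽, φ c ≠ Fin.last k := by
        intro c h
        have hφc := hφ c
        rw [h] at hφc
        have : w ∈ W (Fin.last k) := by
          have := Submodule.sub_mem _ hφc (Submodule.smul_mem _ c hul)
          simpa using this
        exact hw this
      set ψ : 𝔽 → Fin k := fun c => (φ c).castPred (hne c) with hψ
      have hψc : ∀ c, (ψ c).castSucc = φ c := fun c => Fin.castSucc_castPred _ _
      have hinj : Function.Injective ψ := by
        intro c c' h
        by_contra hcc
        have h1 : w + c • u ∈ W ((ψ c).castSucc) := by rw [hψc]; exact hφ c
        have h2 : w + c' • u ∈ W ((ψ c).castSucc) := by rw [h, hψc]; exact hφ c'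
        have h3 : (c - c') • u ∈ W ((ψ c).castSucc) := by
          have := Submodule.sub_mem _ h1 h2
          simpa [sub_smul] using this
        have h4 : u ∈ W ((ψ c).castSucc) := by
          have := Submodule.smul_mem _ (c - c')⁻¹ h3
          rwa [smul_smul, inv_mul_cancel₀ (sub_ne_zero.mpr hcc), one_smul] at this
        exact hu (ψ c) h4
      have hinj' : Function.Injective (fun c => (ULift.up (ψ c) : ULift (Fin k))) :=
        fun a b hab => hinj (congrArg ULift.down hab)
      have : Cardinal.mk 𝔽 ≤ (k : Cardinal) := by
        simpa using Cardinal.mk_le_of_injective hinj'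
      have : ((k + 1 : ℕ) : Cardinal) ≤ (k : Cardinal) := le_trans hk this
      have : k + 1 ≤ k := by exact_mod_cast this
      omega

theorem mem_gamma_iff_nabla_nonempty (𝔽 K : Type*) [Field 𝔽] [Field K] [Algebra 𝔽 K] (r : ℕ) (hr : 1 ≤ r)
    (v : Fin r → K → WithTop ℤ) (hv : ∀ i, IsDVal 𝔽 K (v i))
    (hvd : ∀ i j : Fin r, i ≠ j → v i ≠ v j)
    (S : Set (K → WithTop ℤ)) (hS : ∀ w ∈ S, IsDVal 𝔽 K w)
    (hSv : ∀ w ∈ S, ∀ i, w ≠ v i)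
    (hcard : (r : Cardinal) ≤ Cardinal.mk 𝔽) :
    ∀ m : Fin r → ℕ, m ∈ Gamma v S ↔ ∀ i : Fin r, (nabla v S i m).Nonempty := by
  intro m
  constructor
  · rintro ⟨f, hf0, hfA, hfv⟩ i
    exact ⟨m, ⟨f, hf0, hfA, hfv⟩, rfl, fun j _ => le_rfl⟩
  · intro h
    choose n hn using h
    choose f hf0 hfA hfv using fun i => (hn i).1
    have hnm : ∀ i j, n i j ≤ m j := by
      intro i j
      by_cases hji : j = i
      · subst hji; exact le_of_eq (hn j).2.1
      · exact (hn i).2.2 j hji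
    have hfL : ∀ i, f i ∈ LL 𝔽 v hv S hS (fun j => (m j : ℤ)) := by
      intro i
      refine ⟨hfA i, fun j => ?_⟩
      rw [hfv i j]
      have hle : (-(m j : ℤ)) ≤ (-(n i j : ℤ)) :=
        neg_le_neg (by exact_mod_cast hnm i j)
      exact WithTop.coe_le_coe.mpr hle
    set M : Submodule 𝔽 K := Submodule.span 𝔽 (Set.range f) with hMdef
    have hML : M ≤ LL 𝔽 v hv S hS (fun j => (m j : ℤ)) := by
      rw [hMdef, Submodule.span_le]
      rintro _ ⟨i, rfl⟩
      exact hfL i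
    let W : Fin r → Submodule 𝔽 K := fun i =>
      { carrier := {g : K | ((-(m i : ℤ) : ℤ) : WithTop ℤ) < v i g}
        zero_mem' := by
          rw [Set.mem_setOf_eq, (hv i).map_zero']
          exact WithTop.coe_lt_top _
        add_mem' := by
          intro a b ha hb
          exact lt_of_lt_of_le (lt_min ha hb) ((hv i).add_ge a b)
        smul_mem' := by
          intro c a ha
          by_cases hc : c = 0
          · subst hc
            rw [zero_smul]
            show ((-(m i : ℤ) : ℤ) : WithTop ℤ) < v i 0
            rw [(hv i).map_zero']
            exact WithTop.coe_lt_top _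
          · show ((-(m i : ℤ) : ℤ) : WithTop ℤ) < v i (c • a)
            rw [Algebra.smul_def, (hv i).map_mul', (hv i).trivial_on c hc, zero_add]
            exact ha }
    have hfM : ∀ i, f i ∈ M := fun i => Submodule.subset_span (Set.mem_range_self i)
    have hW' : ∀ i, (W i).comap M.subtype ≠ ⊤ := by
      intro i h
      have hmem : (⟨f i, hfM i⟩ : M) ∈ (W i).comap M.subtype := h ▸ Submodule.mem_top
      have h2 : ((-(m i : ℤ) : ℤ) : WithTop ℤ) < v i (f i) := hmem
      rw [hfv i i] at h2
      rw [(hn i).2.1] at h2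
      exact lt_irrefl _ h2
    obtain ⟨x, hx⟩ := avoid_subspaces r hcard (fun i => (W i).comap M.subtype) hW'
    obtain ⟨hgA, hgv⟩ := hML x.2
    have hveq : ∀ i, v i (x : K) = ((-(m i : ℤ) : ℤ) : WithTop ℤ) := by
      intro i
      refine le_antisymm ?_ (hgv i)
      refine not_lt.mp (fun hlt => hx i ?_)
      exact Submodule.mem_comap.mpr hlt
    have hx0 : (x : K) ≠ 0 := by
      intro h0
      have h1 := hveq ⟨0, hr⟩
      rw [h0, (hv _).map_zero'] at h1
      exact WithTop.top_ne_coe h1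
    exact ⟨(x : K), hx0, hgA, fun i => hveq i⟩
end

section
/- Assume 𝔽 has at least r elements. For every m ∈ ℕ^r and every i ∈ {1, …, r}, one has ∇_i(m) ≠ ∅ if and only if L(m − ε_i) ≠ L(m). -/
/-- A vector space over a field `𝕜` with at least `n` elements is not the union of
`n` proper subspaces. -/
lemma exists_notMem_of_card_le (𝕜 M : Type*) [Field 𝕜] [AddCommGroup M] [Module 𝕜 M] :
    ∀ (n : ℕ) (W : Fin n → Submodule 𝕜 M), (n : Cardinal) ≤ Cardinal.mk 𝕜 →
      (∀ j, W j ≠ ⊤) → ∃ x : M, ∀ j, x ∉ W j := by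
  intro n
  induction n with
  | zero => exact fun W _ _ => ⟨0, fun j => j.elim0⟩
  | succ n ih =>
    intro W hcard hne
    obtain ⟨y, hy⟩ := ih (fun j => W j.castSucc)
      (le_trans (by exact_mod_cast Nat.cast_le.mpr (Nat.le_succ n)) hcard)
      (fun j => hne j.castSucc)
    by_cases hyl : y ∉ W (Fin.last n)
    · refine ⟨y, fun j => ?_⟩
      induction j using Fin.lastCases with
      | last => exact hyl
      | cast j => exact hy j
    push_neg at hyl
    obtain ⟨x, hx⟩ : ∃ x : M, x ∉ W (Fin.last n) := by
      by_contra hcon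
      push_neg at hcon
      exact hne (Fin.last n) (Submodule.eq_top_iff'.mpr hcon)
    by_cases hc : ∃ c : 𝕜, ∀ j : Fin n, x + c • y ∉ W j.castSucc
    · obtain ⟨c, hcgood⟩ := hc
      refine ⟨x + c • y, fun j => ?_⟩
      induction j using Fin.lastCases with
      | last =>
        intro hmem
        have hsub := (W (Fin.last n)).sub_mem hmem ((W (Fin.last n)).smul_mem c hyl)
        rw [add_sub_cancel_right] at hsub
        exact hx hsub
      | cast j => exact hcgood j
    push_neg at hc
    choose φ hφ using hc
    have hinj : Function.Injective φ := by
      intro c c' hcc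
      by_contra hne'
      have hmem : (c - c') • y ∈ W (φ c').castSucc := by
        have h1 := hφ c
        have h2 := hφ c'
        rw [hcc] at h1
        have := (W (φ c').castSucc).sub_mem h1 h2
        simpa [sub_smul] using this
      have : y ∈ W (φ c').castSucc := by
        have := (W (φ c').castSucc).smul_mem (c - c')⁻¹ hmem
        rwa [smul_smul, inv_mul_cancel₀ (sub_ne_zero.mpr hne'), one_smul] at this
      exact hy (φ c') this
    have : Finite 𝕜 := Finite.of_injective φ hinj
    have hft : Fintype 𝕜 := Fintype.ofFinite 𝕜
    have h1 : Fintype.card 𝕜 ≤ n := by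
      simpa using Fintype.card_le_of_injective φ hinj
    have h2 : ((n + 1 : ℕ) : Cardinal) ≤ (Fintype.card 𝕜 : Cardinal) := by
      rwa [← Cardinal.mk_fintype 𝕜]
    have := Nat.cast_le.mp h2
    omega

/-- The subspace of functions with `v`-valuation at least 1. -/
def posVal {𝔽 K : Type*} [Field 𝔽] [Field K] [Algebra 𝔽 K] (w : K → WithTop ℤ)
    (hw : IsDVal 𝔽 K w) : Submodule 𝔽 K where
  carrier := {f : K | (1 : WithTop ℤ) ≤ w f}
  zero_mem' := by rw [Set.mem_setOf_eq, hw.map_zero']; exact le_top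
  add_mem' := by
    intro f g hf hg
    exact le_trans (le_min hf hg) (hw.add_ge f g)
  smul_mem' := by
    intro c f hf
    by_cases hc : c = 0
    · subst hc
      rw [zero_smul, Set.mem_setOf_eq, hw.map_zero']
      exact le_top
    · rw [Set.mem_setOf_eq, Algebra.smul_def c f, hw.map_mul', hw.trivial_on c hc, zero_add]
      exact hf

theorem nabla_nonempty_iff_LL_ne (𝔽 K : Type*) [Field 𝔽] [Field K] [Algebra 𝔽 K] (r : ℕ) (hr : 1 ≤ r)
    (v : Fin r → K → WithTop ℤ) (hv : ∀ i, IsDVal 𝔽 K (v i))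
    (hvd : ∀ i j : Fin r, i ≠ j → v i ≠ v j)
    (S : Set (K → WithTop ℤ)) (hS : ∀ w ∈ S, IsDVal 𝔽 K w)
    (hSv : ∀ w ∈ S, ∀ i, w ≠ v i)
    (hcard : (r : Cardinal) ≤ Cardinal.mk 𝔽) :
    ∀ (m : Fin r → ℕ) (i : Fin r),
      (nabla v S i m).Nonempty ↔
        LL 𝔽 v hv S hS ((fun j => (m j : ℤ)) - Pi.single i 1) ≠
          LL 𝔽 v hv S hS (fun j => (m j : ℤ)) := by
  intro m i
  set V := LL 𝔽 v hv S hS (fun j => (m j : ℤ)) with hV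
  set V₀ := LL 𝔽 v hv S hS ((fun j => (m j : ℤ)) - Pi.single i 1) with hV₀
  have memV : ∀ f : K, f ∈ V ↔ f ∈ regA S ∧ ∀ j, ((-(m j : ℤ) : ℤ) : WithTop ℤ) ≤ v j f :=
    fun f => Iff.rfl
  have memV₀ : ∀ f : K, f ∈ V₀ ↔ f ∈ regA S ∧
      ∀ j, ((-((m j : ℤ) - Pi.single (M := fun _ => ℤ) i 1 j) : ℤ) : WithTop ℤ) ≤ v j f := by
    intro f
    constructor
    · rintro ⟨h1, h2⟩; exact ⟨h1, fun j => h2 j⟩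
    · rintro ⟨h1, h2⟩; exact ⟨h1, fun j => h2 j⟩
  have hsingle : ∀ j : Fin r, Pi.single (M := fun _ => ℤ) i 1 j = if j = i then 1 else 0 :=
    fun j => Pi.single_apply i 1 j
  have hV₀leV : V₀ ≤ V := by
    intro f hf
    rw [memV₀] at hf
    refine (memV f).mpr ⟨hf.1, fun j => le_trans ?_ (hf.2 j)⟩
    rw [WithTop.coe_le_coe]
    have := hsingle j
    by_cases h : j = i <;> simp [h] at this ⊢ <;> omega
  constructor
  · -- forward: nabla nonempty → spaces differ
    rintro ⟨n, ⟨f, hf0, hfreg, hfval⟩, hni, hnle⟩ heq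
    have hfV : f ∈ V := by
      refine (memV f).mpr ⟨hfreg, fun j => ?_⟩
      rw [hfval j, WithTop.coe_le_coe]
      by_cases h : j = i
      · subst h; rw [hni]
      · have := hnle j h; omega
    rw [← heq] at hfV
    have := ((memV₀ f).mp hfV).2 i
    rw [hfval i, hni, WithTop.coe_le_coe, hsingle i, if_pos rfl] at this
    omega
  · -- backward: spaces differ → nabla nonempty
    intro hne
    -- the r proper subspaces of V to avoid
    set P : Fin r → Submodule 𝔽 V := fun j =>
      if j = i then V₀.comap V.subtype else (posVal (v j) (hv j)).comap V.subtype with hP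
    have hPi : P i = V₀.comap V.subtype := by
      simp [hP]
    have hPj : ∀ j, j ≠ i → P j = (posVal (v j) (hv j)).comap V.subtype := by
      intro j hj
      simp only [hP]
      rw [if_neg hj]
    have hone : (1 : K) ∈ V := by
      refine (memV 1).mpr ⟨fun w hw => ?_, fun j => ?_⟩
      · have := (hS w hw).trivial_on 1 one_ne_zero
        rw [map_one] at this
        rw [this]
      · have := (hv j).trivial_on 1 one_ne_zero
        rw [map_one] at this
        rw [this, ← WithTop.coe_zero, WithTop.coe_le_coe]
        omega
    have hPproper : ∀ j, P j ≠ ⊤ := by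
      intro j
      by_cases h : j = i
      · subst h
        rw [hPi]
        intro htop
        apply hne
        refine le_antisymm hV₀leV (fun f hf => ?_)
        have : (⟨f, hf⟩ : V) ∈ V₀.comap V.subtype := htop ▸ Submodule.mem_top
        exact this
      · rw [hPj j h]
        intro htop
        have h1 : (⟨1, hone⟩ : V) ∈ (posVal (v j) (hv j)).comap V.subtype :=
          htop ▸ Submodule.mem_top
        have h2 : (1 : WithTop ℤ) ≤ v j 1 := h1
        have := (hv j).trivial_on 1 one_ne_zero
        rw [map_one] at this
        rw [this] at h2
        exact absurd (by exact_mod_cast h2 : (1 : ℤ) ≤ 0) (by omega)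
    obtain ⟨x, hx⟩ := exists_notMem_of_card_le 𝔽 V r P hcard hPproper
    set f : K := (x : K) with hf
    have hfV : f ∈ V := x.2
    have hfreg : f ∈ regA S := ((memV f).mp hfV).1
    have hfge : ∀ j, ((-(m j : ℤ) : ℤ) : WithTop ℤ) ≤ v j f := ((memV f).mp hfV).2
    have hfnotV₀ : f ∉ V₀ := by
      intro hmem
      exact hx i (by rw [hPi]; exact hmem)
    have hf0 : f ≠ 0 := by
      intro h0
      exact hfnotV₀ (h0 ▸ V₀.zero_mem)
    -- value at i is exactly -(m i)
    have hvi : v i f = ((-(m i : ℤ) : ℤ) : WithTop ℤ) := by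
      have hnotle : ¬ (((-( (m i : ℤ) - 1) : ℤ) : WithTop ℤ) ≤ v i f) := by
        intro hle
        apply hfnotV₀
        refine (memV₀ f).mpr ⟨hfreg, fun j => ?_⟩
        by_cases h : j = i
        · subst h
          rw [hsingle, if_pos rfl]
          exact hle
        · rw [hsingle, if_neg h]
          simpa using hfge j
      obtain ⟨k, hk⟩ := WithTop.ne_top_iff_exists.mp ((hv i).ne_top f hf0)
      have h1 := hfge i
      rw [← hk, WithTop.coe_le_coe] at h1
      rw [← hk, WithTop.coe_le_coe] at hnotle
      rw [← hk, WithTop.coe_eq_coe]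
      omega
    -- values at other points are between -(m j) and 0
    have hvj : ∀ j, j ≠ i → ∃ k : ℤ, v j f = (k : WithTop ℤ) ∧ -(m j : ℤ) ≤ k ∧ k ≤ 0 := by
      intro j hj
      have hnot : ¬ ((1 : WithTop ℤ) ≤ v j f) := by
        intro hle
        exact hx j (by rw [hPj j hj]; exact hle)
      obtain ⟨k, hk⟩ := WithTop.ne_top_iff_exists.mp ((hv j).ne_top f hf0)
      refine ⟨k, hk.symm, ?_, ?_⟩
      · have := hfge j
        rw [← hk, WithTop.coe_le_coe] at this
        exact this
      · by_contra hpos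
        apply hnot
        rw [← hk, ← WithTop.coe_one, WithTop.coe_le_coe]
        omega
    -- build n
    have hex : ∀ j, ∃ kn : ℕ, v j f = ((-(kn : ℤ) : ℤ) : WithTop ℤ) ∧ (kn : ℤ) ≤ (m j : ℤ) ∧
        (j = i → kn = m i) := by
      intro j
      by_cases h : j = i
      · subst h
        exact ⟨m j, hvi, le_refl _, fun _ => rfl⟩
      · obtain ⟨k, hk1, hk2, hk3⟩ := hvj j h
        refine ⟨(-k).toNat, ?_, ?_, fun hc => absurd hc h⟩
        · rw [hk1, WithTop.coe_eq_coe]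
          omega
        · omega
    choose n hn using hex
    refine ⟨n, ⟨f, hf0, hfreg, fun j => (hn j).1⟩, (hn i).2.2 rfl, fun j hj => ?_⟩
    exact_mod_cast (hn j).2.1
end

section
/- Assume 𝔽 has at least r elements. Let i ∈ {1, …, r} and let m̄ ∈ ℕ^r be a gap (m̄ ∉ Γ) whose i-th coordinate is 0. Suppose the set {n ∈ ℕ : n ≥ 1 and m̄ + nε_i ∈ Γ} is nonempty and let m be its minimum. Then every vector n ∈ ℕ^r with n_i = m and such that, for each j ≠ i, either n_j = m̄_j = 0 or n_j < m̄_j, is a gap (n ∉ Γ). In particular, m is a gap at P_i (m ∈ ℕ ∖ Γ_{P_i}). -/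
section Helpers

variable {𝔽 K : Type*} [Field 𝔽] [Field K] [Algebra 𝔽 K] {v : K → WithTop ℤ}

lemma IsDVal.exists_int (hv : IsDVal 𝔽 K v) {f : K} (hf : f ≠ 0) :
    ∃ z : ℤ, v f = (z : WithTop ℤ) := by
  rcases WithTop.ne_top_iff_exists.mp (hv.ne_top f hf) with ⟨z, hz⟩
  exact ⟨z, hz.symm⟩

lemma IsDVal.map_one' (hv : IsDVal 𝔽 K v) : v 1 = 0 := by
  obtain ⟨z, hz⟩ := hv.exists_int (one_ne_zero (α := K))
  have h := hv.map_mul' 1 1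
  rw [mul_one, hz, ← WithTop.coe_add] at h
  have hz2 : z = z + z := by exact_mod_cast h
  have hz0 : z = 0 := by omega
  rw [hz, hz0]; exact WithTop.coe_zero

lemma IsDVal.map_neg' (hv : IsDVal 𝔽 K v) (f : K) : v (-f) = v f := by
  rcases eq_or_ne f 0 with rfl | hf
  · rw [neg_zero]
  · have h1 : v (-1 : K) = 0 := by
      obtain ⟨z, hz⟩ := hv.exists_int (neg_ne_zero.mpr (one_ne_zero (α := K)))
      have h := hv.map_mul' (-1) (-1)
      rw [neg_mul_neg, one_mul, hv.map_one', hz, ← WithTop.coe_add] at h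
      have hz2 : (0 : ℤ) = z + z := by exact_mod_cast h
      have hz0 : z = 0 := by omega
      rw [hz, hz0]; exact WithTop.coe_zero
    rw [← neg_one_mul, hv.map_mul', h1, zero_add]

lemma IsDVal.add_eq_left' (hv : IsDVal 𝔽 K v) {f g : K} (h : v f < v g) :
    v (f + g) = v f := by
  rcases le_or_gt (v (f + g)) (v f) with h1 | h1
  · exact le_antisymm h1 (le_trans (le_min le_rfl h.le) (hv.add_ge f g))
  · exfalso
    have h2 := hv.add_ge (f + g) (-g)
    rw [hv.map_neg', add_neg_cancel_right] at h2
    exact absurd (lt_min h1 h) (not_lt.mpr h2)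

lemma IsDVal.algebraMap_nonneg (hv : IsDVal 𝔽 K v) (a : 𝔽) :
    (0 : WithTop ℤ) ≤ v (algebraMap 𝔽 K a) := by
  rcases eq_or_ne a 0 with rfl | ha
  · rw [map_zero, hv.map_zero']; exact le_top
  · rw [hv.trivial_on a ha]

end Helpers

private lemma key_lemma {𝔽 K : Type*} [Field 𝔽] [Field K] [Algebra 𝔽 K] {r : ℕ}
    (v : Fin r → K → WithTop ℤ) (hv : ∀ i, IsDVal 𝔽 K (v i))
    (S : Set (K → WithTop ℤ)) (hS : ∀ w ∈ S, IsDVal 𝔽 K w)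
    (hcard : (r : Cardinal) ≤ Cardinal.mk 𝔽)
    (i : Fin r) (mbar : Fin r → ℕ) (hbar : mbar ∉ Gamma v S) (hbi : mbar i = 0)
    (m : ℕ) (hm : IsLeast {n : ℕ | 1 ≤ n ∧ mbar + Pi.single i n ∈ Gamma v S} m)
    (g : K) (hg0 : g ≠ 0) (hgA : g ∈ regA S)
    (hgi : v i g = ((-(m : ℤ) : ℤ) : WithTop ℤ))
    (hgj0 : ∀ j, j ≠ i → mbar j = 0 → (0 : WithTop ℤ) ≤ v j g)
    (hgj1 : ∀ j, j ≠ i → mbar j ≠ 0 → ((-(mbar j : ℤ) : ℤ) : WithTop ℤ) < v j g) :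
    False := by
  classical
  obtain ⟨⟨hm1, f, hf0, hfA, hfv⟩, hmmin⟩ := hm
  -- values of f
  have hfi : v i f = ((-(m : ℤ) : ℤ) : WithTop ℤ) := by
    have := hfv i
    simpa [Pi.add_apply, Pi.single_eq_same, hbi] using this
  have hfj : ∀ j, j ≠ i → v j f = ((-(mbar j : ℤ) : ℤ) : WithTop ℤ) := by
    intro j hj
    have := hfv j
    simpa [Pi.add_apply, Pi.single_eq_of_ne hj] using this
  -- some coordinate of mbar is nonzero
  have hj0ex : ∃ j0, mbar j0 ≠ 0 := by
    by_contra hcon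
    push_neg at hcon
    exact hbar ⟨1, one_ne_zero, fun w hw => by rw [(hS w hw).map_one'],
      fun j => by rw [(hv j).map_one', hcon j]; norm_num⟩
  obtain ⟨j0, hj0⟩ := hj0ex
  have hj0i : j0 ≠ i := fun h => hj0 (h ▸ hbi)
  -- u = f / g, v i u = 0
  set u : K := f * g⁻¹ with hu_def
  have hginv : v i g⁻¹ = ((m : ℤ) : WithTop ℤ) := by
    obtain ⟨z, hz⟩ := (hv i).exists_int (inv_ne_zero hg0)
    have h := (hv i).map_mul' g g⁻¹
    rw [mul_inv_cancel₀ hg0, (hv i).map_one', hgi, hz, ← WithTop.coe_add] at h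
    have : (0 : ℤ) = -(m : ℤ) + z := by exact_mod_cast h
    have hzm : z = (m : ℤ) := by omega
    rw [hz, hzm]
  have hui : v i u = 0 := by
    rw [hu_def, (hv i).map_mul', hfi, hginv, ← WithTop.coe_add]
    norm_num
  obtain ⟨a, ha⟩ := (hv i).residue u (by rw [hui])
  have ha0 : a ≠ 0 := by
    intro h
    rw [h, map_zero, sub_zero, hui] at ha
    exact lt_irrefl _ ha
  set aK : K := algebraMap 𝔽 K a with haK_def
  set h : K := f - aK * g with hh_def
  -- h ≠ 0
  have hne : h ≠ 0 := by
    intro hcon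
    have hfeq : f = aK * g := by rwa [hh_def, sub_eq_zero] at hcon
    have h1 : v j0 f = v j0 g := by
      rw [hfeq, (hv j0).map_mul', (hv j0).trivial_on a ha0, zero_add]
    have := hgj1 j0 hj0i hj0
    rw [← h1, hfj j0 hj0i] at this
    exact lt_irrefl _ this
  -- h = (u - aK) * g
  have hfact : h = (u - aK) * g := by
    rw [hh_def, hu_def, sub_mul, mul_assoc, inv_mul_cancel₀ hg0, mul_one]
  have huaK : u - aK ≠ 0 := by
    intro hcon
    rw [hfact, hcon, zero_mul] at hne
    exact hne rfl
  obtain ⟨zi, hzi⟩ := (hv i).exists_int hne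
  -- -(m) < zi
  have hzi_gt : -(m : ℤ) < zi := by
    obtain ⟨zx, hzx⟩ := (hv i).exists_int huaK
    have h1 := (hv i).map_mul' (u - aK) g
    rw [← hfact, hzi, hzx, hgi, ← WithTop.coe_add] at h1
    have h2 : zi = zx + -(m : ℤ) := by exact_mod_cast h1
    have h3 : (0 : WithTop ℤ) < (zx : WithTop ℤ) := hzx ▸ ha
    have h4 : (0 : ℤ) < zx := by exact_mod_cast h3
    omega
  -- values of h away from i
  have hhneg : ∀ j, j ≠ i → mbar j ≠ 0 → v j h = ((-(mbar j : ℤ) : ℤ) : WithTop ℤ) := by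
    intro j hj hmj
    have hlt : v j f < v j (-(aK * g)) := by
      rw [(hv j).map_neg', (hv j).map_mul', (hv j).trivial_on a ha0, zero_add, hfj j hj]
      exact hgj1 j hj hmj
    have : v j (f + -(aK * g)) = v j f := (hv j).add_eq_left' hlt
    rw [hh_def, sub_eq_add_neg, this, hfj j hj]
  have hh0 : ∀ j, j ≠ i → mbar j = 0 → (0 : WithTop ℤ) ≤ v j h := by
    intro j hj hmj
    have h1 : (0 : WithTop ℤ) ≤ v j f := by
      rw [hfj j hj, hmj]; norm_num
    have h2 : (0 : WithTop ℤ) ≤ v j (-(aK * g)) := by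
      rw [(hv j).map_neg', (hv j).map_mul', (hv j).trivial_on a ha0, zero_add]
      exact hgj0 j hj hmj
    calc (0 : WithTop ℤ) ≤ min (v j f) (v j (-(aK * g))) := le_min h1 h2
    _ ≤ v j (f + -(aK * g)) := (hv j).add_ge _ _
    _ = v j h := by rw [hh_def, sub_eq_add_neg]
  -- h is regular
  have hregmul : ∀ (b : 𝔽) (x : K), x ∈ regA S → algebraMap 𝔽 K b * x ∈ regA S := by
    intro b x hx w hw
    rcases eq_or_ne b 0 with rfl | hb
    · rw [map_zero, zero_mul, (hS w hw).map_zero']; exact le_top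
    · rw [(hS w hw).map_mul', (hS w hw).trivial_on b hb, zero_add]; exact hx w hw
  have hregadd : ∀ x y : K, x ∈ regA S → y ∈ regA S → x + y ∈ regA S := by
    intro x y hx hy w hw
    exact le_trans (le_min (hx w hw) (hy w hw)) ((hS w hw).add_ge x y)
  have hregneg : ∀ x : K, x ∈ regA S → -x ∈ regA S := by
    intro x hx w hw
    rw [(hS w hw).map_neg']; exact hx w hw
  have hregconst : ∀ b : 𝔽, algebraMap 𝔽 K b ∈ regA S := by
    intro b w hw
    exact (hS w hw).algebraMap_nonneg b
  have hhA : h ∈ regA S := by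
    rw [hh_def, sub_eq_add_neg]
    exact hregadd _ _ hfA (hregneg _ (hregmul a g hgA))
  -- residues of h
  set a' : Fin r → 𝔽 := fun j =>
    if hj : (0 : WithTop ℤ) ≤ v j h then ((hv j).residue h hj).choose else 0 with ha'_def
  have ha' : ∀ j, (0 : WithTop ℤ) ≤ v j h →
      0 < v j (h - algebraMap 𝔽 K (a' j)) := by
    intro j hj
    have : a' j = ((hv j).residue h hj).choose := by rw [ha'_def]; simp [hj]
    rw [this]
    exact ((hv j).residue h hj).choose_spec
  -- choose c avoiding the residues
  set F : Finset 𝔽 :=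
    (Finset.univ.filter fun j => (0 : WithTop ℤ) ≤ v j h).image fun j => -(a' j) with hF_def
  have hj0neg : v j0 h < 0 := by
    rw [hhneg j0 hj0i hj0]
    exact_mod_cast (by omega : -(mbar j0 : ℤ) < 0)
  have hFcard : F.card < r := by
    have h1 : F.card ≤ (Finset.univ.filter fun j => (0 : WithTop ℤ) ≤ v j h).card :=
      Finset.card_image_le
    have h2 : (Finset.univ.filter fun j => (0 : WithTop ℤ) ≤ v j h) ≠ Finset.univ := by
      intro hEq
      have : j0 ∈ Finset.univ.filter fun j => (0 : WithTop ℤ) ≤ v j h := by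
        rw [hEq]; exact Finset.mem_univ j0
      exact absurd (Finset.mem_filter.mp this).2 (not_le.mpr hj0neg)
    have h3 : (Finset.univ.filter fun j => (0 : WithTop ℤ) ≤ v j h).card <
        (Finset.univ : Finset (Fin r)).card :=
      Finset.card_lt_card ((Finset.filter_subset _ _).ssubset_of_ne h2)
    calc F.card ≤ _ := h1
    _ < (Finset.univ : Finset (Fin r)).card := h3
    _ = r := by simp
  obtain ⟨c, hc⟩ : ∃ c : 𝔽, c ∉ F := by
    by_contra hcon
    push_neg at hcon
    have h1 : Cardinal.mk 𝔽 ≤ (F.card : Cardinal) := by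
      rw [← Cardinal.mk_coe_finset]
      exact Cardinal.mk_le_of_injective (f := fun c => (⟨c, hcon c⟩ : F))
        (fun x y hxy => congrArg Subtype.val hxy)
    have h2 : (F.card : Cardinal) < (r : Cardinal) := by exact_mod_cast hFcard
    exact absurd (hcard.trans h1) (not_le.mpr h2)
  set h' : K := h + algebraMap 𝔽 K c with hh'_def
  -- values of h'
  have hval0 : ∀ j, (0 : WithTop ℤ) ≤ v j h → v j h' = 0 := by
    intro j hj
    have hbc : a' j + c ≠ 0 := by
      intro hcon
      have hcF : c = -(a' j) := by linear_combination hcon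
      apply hc
      rw [hF_def, hcF]
      exact Finset.mem_image.mpr ⟨j, Finset.mem_filter.mpr ⟨Finset.mem_univ j, hj⟩, rfl⟩
    have heq : h' = algebraMap 𝔽 K (a' j + c) + (h - algebraMap 𝔽 K (a' j)) := by
      rw [hh'_def, map_add]; ring
    have hlt : v j (algebraMap 𝔽 K (a' j + c)) < v j (h - algebraMap 𝔽 K (a' j)) := by
      rw [(hv j).trivial_on _ hbc]
      exact ha' j hj
    rw [heq, (hv j).add_eq_left' hlt, (hv j).trivial_on _ hbc]
  have hvalneg : ∀ j, v j h < 0 → v j h' = v j h := by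
    intro j hj
    have hlt : v j h < v j (algebraMap 𝔽 K c) :=
      lt_of_lt_of_le hj ((hv j).algebraMap_nonneg c)
    rw [hh'_def, (hv j).add_eq_left' hlt]
  have hh'A : h' ∈ regA S := hregadd _ _ hhA (hregconst c)
  have hh'ne : h' ≠ 0 := by
    intro hcon
    have h1 : v j0 h' = v j0 h := hvalneg j0 hj0neg
    rw [hcon, (hv j0).map_zero', hhneg j0 hj0i hj0] at h1
    exact (WithTop.coe_ne_top h1.symm)
  -- the new semigroup element
  set k : ℕ := (-zi).toNat with hk_def
  have hmem : mbar + Pi.single i k ∈ Gamma v S := by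
    refine ⟨h', hh'ne, hh'A, fun j => ?_⟩
    rcases eq_or_ne j i with rfl | hj
    · simp only [Pi.add_apply, Pi.single_eq_same, hbi, zero_add]
      rcases le_or_gt 0 zi with hzi0 | hzi0
      · have hk0 : k = 0 := by omega
        have : v j h' = 0 := hval0 j (by rw [hzi]; exact_mod_cast hzi0)
        rw [this, hk0]; norm_num
      · have hkz : (k : ℤ) = -zi := by omega
        have : v j h' = v j h := hvalneg j (by rw [hzi]; exact_mod_cast hzi0)
        rw [this, hzi]
        congr 1
        omega
    · simp only [Pi.add_apply, Pi.single_eq_of_ne hj, add_zero]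
      rcases eq_or_ne (mbar j) 0 with hmj | hmj
      · have : v j h' = 0 := hval0 j (hh0 j hj hmj)
        rw [this, hmj]; norm_num
      · have hneg : v j h < 0 := by
          rw [hhneg j hj hmj]
          exact_mod_cast (by omega : -(mbar j : ℤ) < 0)
        rw [hvalneg j hneg, hhneg j hj hmj]
  have hkm : k < m := by omega
  rcases Nat.eq_zero_or_pos k with hk0 | hk1
  · apply hbar
    rw [hk0] at hmem
    simpa using hmem
  · exact absurd (hmmin ⟨hk1, hmem⟩) (not_le.mpr hkm)
theorem gaps_from_minimal_jump (𝔽 K : Type*) [Field 𝔽] [Field K] [Algebra 𝔽 K] (r : ℕ) (hr : 1 ≤ r)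
    (v : Fin r → K → WithTop ℤ) (hv : ∀ i, IsDVal 𝔽 K (v i))
    (hvd : ∀ i j : Fin r, i ≠ j → v i ≠ v j)
    (S : Set (K → WithTop ℤ)) (hS : ∀ w ∈ S, IsDVal 𝔽 K w)
    (hSv : ∀ w ∈ S, ∀ i, w ≠ v i)
    (hcard : (r : Cardinal) ≤ Cardinal.mk 𝔽) :
    ∀ (i : Fin r) (mbar : Fin r → ℕ), mbar ∉ Gamma v S → mbar i = 0 →
      ∀ m : ℕ, IsLeast {n : ℕ | 1 ≤ n ∧ mbar + Pi.single i n ∈ Gamma v S} m →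
        (∀ n : Fin r → ℕ, n i = m →
          (∀ j, j ≠ i → (n j = mbar j ∧ mbar j = 0) ∨ n j < mbar j) →
          n ∉ Gamma v S) ∧
        m ∉ GammaP v S i := by
  intro i mbar hbar hbi m hm
  constructor
  · intro n hni hcond hn
    obtain ⟨g, hg0, hgA, hgv⟩ := hn
    refine key_lemma v hv S hS hcard i mbar hbar hbi m hm g hg0 hgA ?_ ?_ ?_
    · rw [hgv i, hni]
    · intro j hj hmj
      have h1 : n j = 0 := by
        rcases hcond j hj with ⟨h1, h2⟩ | h1 <;> omega
      rw [hgv j, h1]; norm_num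
    · intro j hj hmj
      have h1 : n j < mbar j := by
        rcases hcond j hj with ⟨h1, h2⟩ | h1 <;> omega
      rw [hgv j]
      exact_mod_cast (by omega : -(mbar j : ℤ) < -(n j : ℤ))
  · intro hmem
    obtain ⟨g, hg0, hgA, hgi, hgj⟩ := hmem
    refine key_lemma v hv S hS hcard i mbar hbar hbi m hm g hg0 hgA hgi ?_ ?_
    · intro j hj _
      exact hgj j hj
    · intro j hj hmj
      exact lt_of_lt_of_le (by exact_mod_cast (by omega : -(mbar j : ℤ) < (0:ℤ))) (hgj j hj)
end

section
/- Assume r = 2 and that for every k ∈ ℕ there exist n, n' ∈ ℕ with (k, n) ∈ Γ and (n', k) ∈ Γ. For every gap m₁ ∈ ℕ ∖ Γ_{P₁} set β(m₁) := min{n ∈ ℕ : n ≥ 1 and (m₁, n) ∈ Γ}. Then β(m₁) is a gap at P₂, the resulting map β : ℕ ∖ Γ_{P₁} → ℕ ∖ Γ_{P₂} is a bijection, and moreover m₁ = min{n ∈ ℕ : n ≥ 1 and (n, β(m₁)) ∈ Γ} for every gap m₁ at P₁. -/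
section Helpers

variable {𝔽 K : Type*} [Field 𝔽] [Field K] [Algebra 𝔽 K] {u : K → WithTop ℤ}

lemma dval_one (hu : IsDVal 𝔽 K u) : u 1 = 0 := by
  simpa using hu.trivial_on 1 one_ne_zero

lemma dval_smul (hu : IsDVal 𝔽 K u) {c : 𝔽} (hc : c ≠ 0) (g : K) :
    u (algebraMap 𝔽 K c * g) = u g := by
  rw [hu.map_mul', hu.trivial_on c hc, zero_add]

lemma dval_neg (hu : IsDVal 𝔽 K u) (g : K) : u (-g) = u g := by
  have h : (-g) = algebraMap 𝔽 K (-1) * g := by simp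
  rw [h, dval_smul hu (neg_ne_zero.mpr one_ne_zero)]

lemma dval_sub_min (hu : IsDVal 𝔽 K u) (f g : K) : min (u f) (u g) ≤ u (f - g) := by
  have := hu.add_ge f (-g)
  rwa [dval_neg hu g, ← sub_eq_add_neg] at this

lemma dval_add_eq_left (hu : IsDVal 𝔽 K u) {f g : K} (h : u f < u g) : u (f + g) = u f := by
  refine le_antisymm ?_ (le_trans (le_min le_rfl h.le) (hu.add_ge f g))
  by_contra hlt
  push_neg at hlt
  have e : f + g - g = f := by ring
  have h2 := dval_sub_min hu (f + g) g
  rw [e] at h2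
  exact absurd h2 (not_le.mpr (lt_min hlt h))

lemma dval_sub_eq_left (hu : IsDVal 𝔽 K u) {f g : K} (h : u f < u g) : u (f - g) = u f := by
  rw [sub_eq_add_neg]
  exact dval_add_eq_left hu (by rwa [dval_neg hu])

lemma dval_reduce (hu : IsDVal 𝔽 K u) {f g : K} (hf : f ≠ 0) (hg : g ≠ 0)
    (hfg : u f = u g) : ∃ c : 𝔽, c ≠ 0 ∧ u f < u (f - algebraMap 𝔽 K c * g) := by
  have hq : u (f / g) = 0 := by
    have h1 : u (f / g * g) = u (f / g) + u g := hu.map_mul' _ _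
    rw [div_mul_cancel₀ f hg] at h1
    refine WithTop.add_right_cancel (hu.ne_top g hg) ?_
    rw [← h1, zero_add, hfg]
  obtain ⟨c, hc⟩ := hu.residue (f / g) (le_of_eq hq.symm)
  have hc0 : c ≠ 0 := by
    rintro rfl
    rw [map_zero, sub_zero, hq] at hc
    exact lt_irrefl _ hc
  refine ⟨c, hc0, ?_⟩
  have key : f - algebraMap 𝔽 K c * g = (f / g - algebraMap 𝔽 K c) * g := by
    rw [sub_mul, div_mul_cancel₀ f hg]
  rw [key, hu.map_mul', hfg]
  have := WithTop.add_lt_add_right (hu.ne_top g hg) hc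
  simpa using this

lemma regA_one {S : Set (K → WithTop ℤ)} (hS : ∀ w ∈ S, IsDVal 𝔽 K w) :
    (1 : K) ∈ regA S := fun w hw => (dval_one (hS w hw)).ge

lemma regA_sub_smul {S : Set (K → WithTop ℤ)} (hS : ∀ w ∈ S, IsDVal 𝔽 K w)
    {f g : K} (hf : f ∈ regA S) (hg : g ∈ regA S) {c : 𝔽} (hc : c ≠ 0) :
    f - algebraMap 𝔽 K c * g ∈ regA S := by
  intro w hw
  refine le_trans (le_min (hf w hw) ?_) (dval_sub_min (hS w hw) _ _)
  rw [dval_smul (hS w hw) hc]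
  exact hg w hw

lemma dval_engine {S : Set (K → WithTop ℤ)} (hS : ∀ w ∈ S, IsDVal 𝔽 K w)
    {u w : K → WithTop ℤ} (hu : IsDVal 𝔽 K u) (hw : IsDVal 𝔽 K w)
    {f g : K} (hf0 : f ≠ 0) (hg0 : g ≠ 0) (hfA : f ∈ regA S) (hgA : g ∈ regA S)
    (hshare : u f = u g) {s : ℤ} (hwf : w f = (s : WithTop ℤ))
    (hwg : (s : WithTop ℤ) < w g) :
    ∃ h : K, h ≠ 0 ∧ h ∈ regA S ∧ w h = (s : WithTop ℤ) ∧ u f < u h := by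
  obtain ⟨c, hc0, hlt⟩ := dval_reduce hu hf0 hg0 hshare
  have hcg : w (algebraMap 𝔽 K c * g) = w g := dval_smul hw hc0 g
  have hwh : w (f - algebraMap 𝔽 K c * g) = (s : WithTop ℤ) := by
    rw [dval_sub_eq_left hw (by rw [hcg, hwf]; exact hwg), hwf]
  refine ⟨f - algebraMap 𝔽 K c * g, ?_, regA_sub_smul hS hfA hgA hc0, hwh, hlt⟩
  intro h0
  rw [h0, hw.map_zero'] at hwh
  exact (WithTop.coe_ne_top hwh.symm)

end Helpers

theorem gap_bijection_two_points (𝔽 K : Type*) [Field 𝔽] [Field K] [Algebra 𝔽 K]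
    (v : Fin 2 → K → WithTop ℤ) (hv : ∀ i, IsDVal 𝔽 K (v i))
    (hvd : ∀ i j : Fin 2, i ≠ j → v i ≠ v j)
    (S : Set (K → WithTop ℤ)) (hS : ∀ w ∈ S, IsDVal 𝔽 K w)
    (hSv : ∀ w ∈ S, ∀ i, w ≠ v i)
    (hfull : ∀ k : ℕ,
      (∃ n : ℕ, ![k, n] ∈ Gamma v S) ∧ ∃ n' : ℕ, ![n', k] ∈ Gamma v S)
    (β : ℕ → ℕ)
    (hβ : ∀ m₁ : ℕ, m₁ ∉ GammaP v S 0 →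
      IsLeast {n : ℕ | 1 ≤ n ∧ ![m₁, n] ∈ Gamma v S} (β m₁)) :
    (∀ m₁ : ℕ, m₁ ∉ GammaP v S 0 → β m₁ ∉ GammaP v S 1) ∧
    Set.BijOn β {k : ℕ | k ∉ GammaP v S 0} {k : ℕ | k ∉ GammaP v S 1} ∧
    ∀ m₁ : ℕ, m₁ ∉ GammaP v S 0 →
      IsLeast {n : ℕ | 1 ≤ n ∧ ![n, β m₁] ∈ Gamma v S} m₁ := by
  classical
  have h1A : (1 : K) ∈ regA S := regA_one hS
  have hzeroG : ∀ i : Fin 2, (0 : ℕ) ∈ GammaP v S i := by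
    intro i
    exact ⟨1, one_ne_zero, h1A, by simp [dval_one (hv i)],
      fun j _ => (dval_one (hv j)).ge⟩
  have hpos : ∀ i : Fin 2, ∀ m : ℕ, m ∉ GammaP v S i → 1 ≤ m := by
    intro i m hm
    rcases Nat.eq_zero_or_pos m with rfl | h
    · exact absurd (hzeroG i) hm
    · exact h
  -- membership in GammaP from a witness at index 0
  have memG0 : ∀ (h : K) (m : ℕ), h ≠ 0 → h ∈ regA S →
      v 0 h = ((-(m : ℤ) : ℤ) : WithTop ℤ) → 0 ≤ v 1 h → m ∈ GammaP v S 0 := by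
    intro h m h0 hA hval h1
    refine ⟨h, h0, hA, hval, fun j hj => ?_⟩
    fin_cases j
    · exact absurd rfl hj
    · exact h1
  have memG1 : ∀ (h : K) (m : ℕ), h ≠ 0 → h ∈ regA S →
      v 1 h = ((-(m : ℤ) : ℤ) : WithTop ℤ) → 0 ≤ v 0 h → m ∈ GammaP v S 1 := by
    intro h m h0 hA hval h1
    refine ⟨h, h0, hA, hval, fun j hj => ?_⟩
    fin_cases j
    · exact h1
    · exact absurd rfl hj
  have memGam : ∀ (h : K) (a b : ℕ), h ≠ 0 → h ∈ regA S →
      v 0 h = ((-(a : ℤ) : ℤ) : WithTop ℤ) → v 1 h = ((-(b : ℤ) : ℤ) : WithTop ℤ) →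
      ![a, b] ∈ Gamma v S := by
    intro h a b h0 hA ha hb
    refine ⟨h, h0, hA, fun i => ?_⟩
    fin_cases i
    · simpa using ha
    · simpa using hb
  -- Key lemma
  have KL : ∀ m₁ : ℕ, m₁ ∉ GammaP v S 0 → ∀ g : K, g ≠ 0 → g ∈ regA S →
      v 1 g = ((-(β m₁ : ℤ) : ℤ) : WithTop ℤ) →
      ((-(m₁ : ℤ) : ℤ) : WithTop ℤ) < v 0 g → False := by
    intro m₁ hm g hg0 hgA hg1 hg0v
    obtain ⟨⟨hb1, f, hf0, hfA, hf⟩, hmin⟩ := hβ m₁ hm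
    have hf0v : v 0 f = ((-(m₁ : ℤ) : ℤ) : WithTop ℤ) := by simpa using hf 0
    have hf1v : v 1 f = ((-(β m₁ : ℤ) : ℤ) : WithTop ℤ) := by simpa using hf 1
    obtain ⟨h, hh0, hhA, hh0v, hh1v⟩ :=
      dval_engine hS (hv 1) (hv 0) hf0 hg0 hfA hgA (hf1v.trans hg1.symm) hf0v hg0v
    rw [hf1v] at hh1v
    obtain ⟨t, ht⟩ := WithTop.ne_top_iff_exists.mp ((hv 1).ne_top h hh0)
    have htlt : -(β m₁ : ℤ) < t := by
      rw [← ht] at hh1v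
      exact_mod_cast hh1v
    rcases le_or_gt 0 t with hp | hn
    · exact hm (memG0 h m₁ hh0 hhA hh0v (by rw [← ht]; exact_mod_cast hp))
    · have hb'' : ((-t).toNat : ℤ) = -t := Int.toNat_of_nonneg (by omega)
      have hmem : ![m₁, (-t).toNat] ∈ Gamma v S := by
        refine memGam h m₁ (-t).toNat hh0 hhA hh0v ?_
        rw [← ht]
        norm_cast
        omega
      have := hmin ⟨by omega, hmem⟩
      omega
  -- Part 1
  have part1 : ∀ m₁ : ℕ, m₁ ∉ GammaP v S 0 → β m₁ ∉ GammaP v S 1 := by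
    intro m₁ hm hb
    obtain ⟨g, hg0, hgA, hg1v, hgge⟩ := hb
    refine KL m₁ hm g hg0 hgA hg1v (lt_of_lt_of_le ?_ (hgge 0 (by decide)))
    exact_mod_cast (by have := hpos 0 m₁ hm; omega : -(m₁ : ℤ) < 0)
  -- Part 3
  have part3 : ∀ m₁ : ℕ, m₁ ∉ GammaP v S 0 →
      IsLeast {n : ℕ | 1 ≤ n ∧ ![n, β m₁] ∈ Gamma v S} m₁ := by
    intro m₁ hm
    refine ⟨⟨hpos 0 m₁ hm, (hβ m₁ hm).1.2⟩, ?_⟩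
    rintro n ⟨hn1, g, hg0, hgA, hg⟩
    by_contra hlt
    push_neg at hlt
    have hg0v : v 0 g = ((-(n : ℤ) : ℤ) : WithTop ℤ) := by simpa using hg 0
    have hg1v : v 1 g = ((-(β m₁ : ℤ) : ℤ) : WithTop ℤ) := by simpa using hg 1
    refine KL m₁ hm g hg0 hgA hg1v ?_
    rw [hg0v]
    exact_mod_cast (by omega : -(m₁ : ℤ) < -(n : ℤ))
  refine ⟨part1, ⟨part1, ?_, ?_⟩, part3⟩
  · -- InjOn
    intro x hx y hy hxy
    exact (part3 x hx).unique (hxy ▸ part3 y hy)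
  · -- SurjOn
    intro m₂ hm₂
    simp only [Set.mem_setOf_eq] at hm₂
    have hm2pos : 1 ≤ m₂ := hpos 1 m₂ hm₂
    obtain ⟨n', hn'⟩ := (hfull m₂).2
    have hn'1 : 1 ≤ n' := by
      rcases Nat.eq_zero_or_pos n' with rfl | h
      · obtain ⟨f, hf0, hfA, hf⟩ := hn'
        have hf0v : v 0 f = ((-(0 : ℤ) : ℤ) : WithTop ℤ) := by simpa using hf 0
        have hf1v : v 1 f = ((-(m₂ : ℤ) : ℤ) : WithTop ℤ) := by simpa using hf 1
        exact absurd (memG1 f m₂ hf0 hfA hf1v (by rw [hf0v]; simp)) hm₂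
      · exact h
    have hT : ∃ n : ℕ, 1 ≤ n ∧ ![n, m₂] ∈ Gamma v S := ⟨n', hn'1, hn'⟩
    set a := Nat.find hT with ha
    obtain ⟨ha1, f, hf0, hfA, hf⟩ := Nat.find_spec hT
    have hf0v : v 0 f = ((-(a : ℤ) : ℤ) : WithTop ℤ) := by simpa using hf 0
    have hf1v : v 1 f = ((-(m₂ : ℤ) : ℤ) : WithTop ℤ) := by simpa using hf 1
    -- symmetric key lemma
    have SL : ∀ g : K, g ≠ 0 → g ∈ regA S →
        v 0 g = ((-(a : ℤ) : ℤ) : WithTop ℤ) →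
        ((-(m₂ : ℤ) : ℤ) : WithTop ℤ) < v 1 g → False := by
      intro g hg0 hgA hg0v hg1v
      obtain ⟨h, hh0, hhA, hh1v, hh0v⟩ :=
        dval_engine hS (hv 0) (hv 1) hf0 hg0 hfA hgA (hf0v.trans hg0v.symm) hf1v hg1v
      rw [hf0v] at hh0v
      obtain ⟨t, ht⟩ := WithTop.ne_top_iff_exists.mp ((hv 0).ne_top h hh0)
      have htlt : -(a : ℤ) < t := by
        rw [← ht] at hh0v
        exact_mod_cast hh0v
      rcases le_or_gt 0 t with hp | hn
      · exact hm₂ (memG1 h m₂ hh0 hhA hh1v (by rw [← ht]; exact_mod_cast hp))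
      · have hb'' : ((-t).toNat : ℤ) = -t := Int.toNat_of_nonneg (by omega)
        have hmem : ![(-t).toNat, m₂] ∈ Gamma v S := by
          refine memGam h (-t).toNat m₂ hh0 hhA ?_ hh1v
          rw [← ht]
          norm_cast
          omega
        have hlt : (-t).toNat < a := by omega
        exact Nat.find_min hT hlt ⟨by omega, hmem⟩
    have haG0 : a ∉ GammaP v S 0 := by
      intro haG
      obtain ⟨g, hg0, hgA, hg0v, hgge⟩ := haG
      refine SL g hg0 hgA hg0v (lt_of_lt_of_le ?_ (hgge 1 (by decide)))
      exact_mod_cast (by omega : -(m₂ : ℤ) < 0)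
    refine ⟨a, haG0, ?_⟩
    obtain ⟨⟨hb1, g, hg0, hgA, hg⟩, hmin⟩ := hβ a haG0
    have hble : β a ≤ m₂ := hmin ⟨hm2pos, memGam f a m₂ hf0 hfA hf0v hf1v⟩
    by_contra hne
    have hblt : β a < m₂ := lt_of_le_of_ne hble hne
    have hg0v : v 0 g = ((-(a : ℤ) : ℤ) : WithTop ℤ) := by simpa using hg 0
    have hg1v : v 1 g = ((-(β a : ℤ) : ℤ) : WithTop ℤ) := by simpa using hg 1
    refine SL g hg0 hgA hg0v ?_
    rw [hg1v]
    exact_mod_cast (by omega : -(m₂ : ℤ) < -(β a : ℤ))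
end

section
/- If (1, …, 1) ∈ Γ, then for every m ∈ ℕ^r there exists an index i ∈ {1, …, r} with L(m − ε_i) ≠ L(m); in particular, Γ has no pure gaps. -/
lemma IsDVal.val_one_s12 {𝔽 K : Type*} [Field 𝔽] [Field K] [Algebra 𝔽 K] {w : K → WithTop ℤ}
    (hw : IsDVal 𝔽 K w) : w 1 = 0 := by
  have h := hw.map_mul' 1 1
  rw [one_mul] at h
  have hne := hw.ne_top 1 one_ne_zero
  lift w 1 to ℤ using hne with a ha
  rw [← WithTop.coe_add, WithTop.coe_eq_coe] at h
  have : a = 0 := by omega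
  exact_mod_cast this

theorem no_pure_gaps_of_one_mem (𝔽 K : Type*) [Field 𝔽] [Field K] [Algebra 𝔽 K] (r : ℕ) (hr : 1 ≤ r)
    (v : Fin r → K → WithTop ℤ) (hv : ∀ i, IsDVal 𝔽 K (v i))
    (hvd : ∀ i j : Fin r, i ≠ j → v i ≠ v j)
    (S : Set (K → WithTop ℤ)) (hS : ∀ w ∈ S, IsDVal 𝔽 K w)
    (hSv : ∀ w ∈ S, ∀ i, w ≠ v i)
    (h1 : (fun _ => 1 : Fin r → ℕ) ∈ Gamma v S) :
    (∀ m : Fin r → ℕ, ∃ i : Fin r,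
      LL 𝔽 v hv S hS ((fun j => (m j : ℤ)) - Pi.single i 1) ≠
        LL 𝔽 v hv S hS (fun j => (m j : ℤ))) ∧
    ¬ ∃ m : Fin r → ℕ, m ∉ Gamma v S ∧
        ∀ i : Fin r,
          LL 𝔽 v hv S hS (fun j => (m j : ℤ)) =
            LL 𝔽 v hv S hS ((fun j => (m j : ℤ)) - Pi.single i 1) := by
  obtain ⟨g, hg0, hgA, hgv⟩ := h1
  have hgv' : ∀ i, v i g = ((-1 : ℤ) : WithTop ℤ) := by
    intro i; simpa using hgv i
  have hpow : ∀ (n : ℕ) (i : Fin r), v i (g ^ n) = ((-(n : ℤ) : ℤ) : WithTop ℤ) := by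
    intro n i
    induction n with
    | zero => simpa using (hv i).val_one_s12
    | succ k ih =>
      rw [pow_succ, (hv i).map_mul', ih, hgv', ← WithTop.coe_add]
      congr 1
      push_cast
      ring
  have hpowS : ∀ (n : ℕ) (w : K → WithTop ℤ), w ∈ S → 0 ≤ w (g ^ n) := by
    intro n w hw
    induction n with
    | zero => simp [(hS w hw).val_one_s12]
    | succ k ih =>
      rw [pow_succ, (hS w hw).map_mul']
      exact add_nonneg ih (hgA w hw)
  have main : ∀ m : Fin r → ℕ, ∃ i : Fin r,
      LL 𝔽 v hv S hS ((fun j => (m j : ℤ)) - Pi.single i 1) ≠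
        LL 𝔽 v hv S hS (fun j => (m j : ℤ)) := by
    intro m
    obtain ⟨i, -, hi⟩ := Finset.exists_min_image Finset.univ m ⟨⟨0, hr⟩, Finset.mem_univ _⟩
    refine ⟨i, fun heq => ?_⟩
    have hfm : g ^ (m i) ∈ LL 𝔽 v hv S hS (fun j => (m j : ℤ)) := by
      refine ⟨fun w hw => hpowS _ w hw, fun j => ?_⟩
      rw [hpow]
      exact WithTop.coe_le_coe.mpr (by have := hi j (Finset.mem_univ j); show -(m j : ℤ) ≤ -(m i : ℤ); omega)
    rw [← heq] at hfm
    have h2 := hfm.2 i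
    rw [hpow] at h2
    simp only [Pi.sub_apply, Pi.single_eq_same] at h2
    have : -((m i : ℤ) - 1) ≤ -(m i : ℤ) := by exact_mod_cast h2
    omega
  refine ⟨main, ?_⟩
  rintro ⟨m, -, hall⟩
  obtain ⟨i, hne⟩ := main m
  exact hne (hall i).symm
end

section
/- Assume 𝔽 has at least r elements. For every integer k ≥ 1 and every i ∈ {1, …, r}, one has k ∈ Γ_{P_i} if and only if kε_i ∈ Γ; equivalently, k is a gap at P_i if and only if kε_i is a gap of Γ. -/
lemma dval_neg_s14 {𝔽 K : Type*} [Field 𝔽] [Field K] [Algebra 𝔽 K] {v : K → WithTop ℤ}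
    (hv : IsDVal 𝔽 K v) (y : K) : v (-y) = v y := by
  have h1 : ((-1 : 𝔽)) ≠ 0 := by norm_num
  have h2 := hv.map_mul' (algebraMap 𝔽 K (-1)) y
  rw [hv.trivial_on _ h1, zero_add] at h2
  rw [← h2]
  congr 1
  rw [map_neg, map_one, neg_one_mul]

lemma dval_add_eq_left_s14 {𝔽 K : Type*} [Field 𝔽] [Field K] [Algebra 𝔽 K] {v : K → WithTop ℤ}
    (hv : IsDVal 𝔽 K v) {x y : K} (h : v x < v y) : v (x + y) = v x := by
  have hmin := hv.add_ge x y
  rw [min_eq_left h.le] at hmin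
  by_contra hne
  have hlt : v x < v (x + y) := hmin.lt_of_ne (Ne.symm hne)
  have h2 := hv.add_ge (x + y) (-y)
  rw [show (x + y) + (-y) = x by ring, dval_neg_s14 hv] at h2
  exact absurd h2 (not_le.mpr (lt_min hlt h))

theorem mem_gammaP_iff_single_mem_gamma (𝔽 K : Type*) [Field 𝔽] [Field K] [Algebra 𝔽 K] (r : ℕ) (hr : 1 ≤ r)
    (v : Fin r → K → WithTop ℤ) (hv : ∀ i, IsDVal 𝔽 K (v i))
    (hvd : ∀ i j : Fin r, i ≠ j → v i ≠ v j)
    (S : Set (K → WithTop ℤ)) (hS : ∀ w ∈ S, IsDVal 𝔽 K w)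
    (hSv : ∀ w ∈ S, ∀ i, w ≠ v i)
    (hcard : (r : Cardinal) ≤ Cardinal.mk 𝔽) :
    ∀ k : ℕ, 1 ≤ k → ∀ i : Fin r,
      k ∈ GammaP v S i ↔ Pi.single i k ∈ Gamma v S := by
  intro k hk i
  constructor
  · rintro ⟨f, hf0, hfA, hfi, hfj⟩
    -- choose residues at the other points
    have hres : ∀ j : Fin r, j ≠ i → ∃ a : 𝔽, 0 < v j (f - algebraMap 𝔽 K a) :=
      fun j hj => (hv j).residue f (hfj j hj)
    choose b hb using hres
    -- the map sending j ≠ i to the bad constant -(b j)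
    set g : {j : Fin r // j ≠ i} → 𝔽 := fun j => -(b j.1 j.2) with hg
    have hns : ¬ Function.Surjective g := by
      intro hsurj
      have h1 : Cardinal.mk 𝔽 ≤ Cardinal.mk (ULift.{_} {j : Fin r // j ≠ i}) :=
        Cardinal.mk_le_of_surjective (f := g ∘ ULift.down)
          (hsurj.comp ULift.down_surjective)
      have h2 : Cardinal.mk (ULift.{_} {j : Fin r // j ≠ i}) = ((r - 1 : ℕ) : Cardinal) := by
        rw [Cardinal.mk_uLift, Cardinal.mk_fintype]
        rw [show Fintype.card {j : Fin r // j ≠ i} = r - 1 by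
          simp [Fintype.card_subtype_compl]]
        simp
      have h3 : ((r - 1 : ℕ) : Cardinal) < (r : Cardinal) :=
        Nat.cast_lt.mpr (Nat.sub_lt hr one_pos)
      rw [h2] at h1
      exact absurd (hcard.trans h1) (not_le.mpr h3)
    rw [Function.Surjective] at hns
    push_neg at hns
    obtain ⟨a, ha⟩ := hns
    set c : K := algebraMap 𝔽 K a with hc
    have hcge : (0 : WithTop ℤ) ≤ v i c ∧ ∀ w, IsDVal 𝔽 K w → (0 : WithTop ℤ) ≤ w c := by
      constructor
      · by_cases h0 : a = 0
        · simp [hc, h0, (hv i).map_zero']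
        · rw [hc, (hv i).trivial_on a h0]
      · intro w hw
        by_cases h0 : a = 0
        · simp [hc, h0, hw.map_zero']
        · rw [hc, hw.trivial_on a h0]
    -- value at i of f + c
    have hvic : v i (f + c) = ((-(k : ℤ) : ℤ) : WithTop ℤ) := by
      by_cases h0 : a = 0
      · simpa [hc, h0] using hfi
      · rw [add_comm]
        rw [show v i (c + f) = v i (f + c) from by rw [add_comm]]
        have hlt : v i f < v i c := by
          rw [hfi, hc, (hv i).trivial_on a h0]
          exact_mod_cast (by omega : -(k : ℤ) < 0)
        rw [dval_add_eq_left_s14 (hv i) hlt, hfi]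
    refine ⟨f + c, ?_, ?_, ?_⟩
    · intro h0
      rw [h0, (hv i).map_zero'] at hvic
      exact (WithTop.coe_ne_top (a := (-(k:ℤ)))) hvic.symm
    · intro w hw
      refine le_trans (le_min (hfA w hw) ((hcge.2 w (hS w hw)))) ((hS w hw).add_ge f c)
    · intro j
      by_cases hj : j = i
      · subst hj
        rw [hvic]
        norm_num
      · have hbad : b j hj + a ≠ 0 := by
          intro h0
          exact ha ⟨j, hj⟩ (neg_eq_of_add_eq_zero_right h0)
        have hsplit : f + c = algebraMap 𝔽 K (b j hj + a) + (f - algebraMap 𝔽 K (b j hj)) := by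
          rw [map_add, hc]; ring
        have hlt : v j (algebraMap 𝔽 K (b j hj + a)) < v j (f - algebraMap 𝔽 K (b j hj)) := by
          rw [(hv j).trivial_on _ hbad]
          exact hb j hj
        rw [hsplit, dval_add_eq_left_s14 (hv j) hlt, (hv j).trivial_on _ hbad]
        simp [Pi.single_eq_of_ne hj]
  · rintro ⟨f, hf0, hfA, hf⟩
    refine ⟨f, hf0, hfA, ?_, ?_⟩
    · have := hf i
      simpa using this
    · intro j hj
      have := hf j
      rw [Pi.single_eq_of_ne hj] at this
      rw [this]
      norm_num
end

section
/- Assume r = 2 and that for every k ∈ ℕ there exist n, n' ∈ ℕ with (k, n) ∈ Γ and (n', k) ∈ Γ. For a gap m₁ ∈ ℕ ∖ Γ_{P₁} set β(m₁) := min{n ∈ ℕ : n ≥ 1 and (m₁, n) ∈ Γ}, and for a gap m₂ ∈ ℕ ∖ Γ_{P₂} set α(m₂) := min{n ∈ ℕ : n ≥ 1 and (n, m₂) ∈ Γ}. Then (m₁, m₂) ∈ ℕ² is a pure gap if and only if m₁ is a gap at P₁, m₂ is a gap at P₂, m₂ < β(m₁) and m₁ < α(m₂). -/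
theorem pure_gap_characterization_two_points (𝔽 K : Type*) [Field 𝔽] [Field K] [Algebra 𝔽 K]
    (v : Fin 2 → K → WithTop ℤ) (hv : ∀ i, IsDVal 𝔽 K (v i))
    (hvd : ∀ i j : Fin 2, i ≠ j → v i ≠ v j)
    (S : Set (K → WithTop ℤ)) (hS : ∀ w ∈ S, IsDVal 𝔽 K w)
    (hSv : ∀ w ∈ S, ∀ i, w ≠ v i)
    (hfull : ∀ k : ℕ,
      (∃ n : ℕ, ![k, n] ∈ Gamma v S) ∧ ∃ n' : ℕ, ![n', k] ∈ Gamma v S)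
    (β α : ℕ → ℕ)
    (hβ : ∀ m₁ : ℕ, m₁ ∉ GammaP v S 0 →
      IsLeast {n : ℕ | 1 ≤ n ∧ ![m₁, n] ∈ Gamma v S} (β m₁))
    (hα : ∀ m₂ : ℕ, m₂ ∉ GammaP v S 1 →
      IsLeast {n : ℕ | 1 ≤ n ∧ ![n, m₂] ∈ Gamma v S} (α m₂)) :
    ∀ m₁ m₂ : ℕ,
      ((![m₁, m₂] : Fin 2 → ℕ) ∉ Gamma v S ∧
        ∀ i : Fin 2,
          LL 𝔽 v hv S hS (fun j => ((![m₁, m₂] : Fin 2 → ℕ) j : ℤ)) =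
            LL 𝔽 v hv S hS ((fun j => ((![m₁, m₂] : Fin 2 → ℕ) j : ℤ)) - Pi.single i 1))
      ↔ (m₁ ∉ GammaP v S 0 ∧ m₂ ∉ GammaP v S 1 ∧ m₂ < β m₁ ∧ m₁ < α m₂) := by
  intro m₁ m₂
  have mem_LL : ∀ (μ : Fin 2 → ℤ) (f : K), f ∈ LL 𝔽 v hv S hS μ ↔
      f ∈ regA S ∧ ∀ i, ((-(μ i) : ℤ) : WithTop ℤ) ≤ v i f := fun μ f => Iff.rfl
  set m : Fin 2 → ℤ := fun j => ((![m₁, m₂] : Fin 2 → ℕ) j : ℤ) with hm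
  have hm0 : m 0 = (m₁ : ℤ) := by simp [hm]
  have hm1 : m 1 = (m₂ : ℤ) := by simp [hm]
  have hint : ∀ (i : Fin 2) (f : K), f ≠ 0 → ∃ t : ℤ, v i f = (t : WithTop ℤ) := by
    intro i f hf
    rcases WithTop.ne_top_iff_exists.mp ((hv i).ne_top f hf) with ⟨t, ht⟩
    exact ⟨t, ht.symm⟩
  have key : ∀ i : Fin 2,
      (¬ ∃ f : K, f ≠ 0 ∧ f ∈ regA S ∧ v i f = ((-(m i) : ℤ) : WithTop ℤ) ∧
        ∀ j, ((-(m j) : ℤ) : WithTop ℤ) ≤ v j f) ↔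
      LL 𝔽 v hv S hS m = LL 𝔽 v hv S hS (m - Pi.single i 1) := by
    intro i
    constructor
    · intro hne
      apply le_antisymm
      · intro f hf
        obtain ⟨hfA, hfb⟩ := (mem_LL m f).mp hf
        refine (mem_LL _ f).mpr ⟨hfA, fun j => ?_⟩
        by_cases hji : j = i
        · subst hji
          rcases eq_or_ne f 0 with rfl | hf0
          · rw [(hv j).map_zero']; exact le_top
          obtain ⟨t, ht⟩ := hint j f hf0
          have h1 : -(m j) ≤ t := by
            have := hfb j; rw [ht] at this; exact_mod_cast this
          have h2 : t ≠ -(m j) := by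
            intro h
            exact hne ⟨f, hf0, hfA, by rw [ht, h], hfb⟩
          have hj' : ((m - Pi.single j 1 : Fin 2 → ℤ)) j = m j - 1 := by
            simp [Pi.sub_apply]
          rw [hj', ht]
          exact_mod_cast (by omega : -(m j - 1) ≤ t)
        · have hj' : ((m - Pi.single i 1 : Fin 2 → ℤ)) j = m j := by
            simp [Pi.sub_apply, Pi.single_eq_of_ne hji]
          rw [hj']; exact hfb j
      · intro f hf
        obtain ⟨hfA, hfb⟩ := (mem_LL _ f).mp hf
        refine (mem_LL m f).mpr ⟨hfA, fun j => ?_⟩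
        refine le_trans ?_ (hfb j)
        by_cases hji : j = i
        · subst hji
          have hj' : ((m - Pi.single j 1 : Fin 2 → ℤ)) j = m j - 1 := by
            simp [Pi.sub_apply]
          rw [hj']
          exact_mod_cast (by omega : -(m j) ≤ -(m j - 1))
        · have hj' : ((m - Pi.single i 1 : Fin 2 → ℤ)) j = m j := by
            simp [Pi.sub_apply, Pi.single_eq_of_ne hji]
          rw [hj']
    · rintro heq ⟨f, hf0, hfA, hfv, hfb⟩
      have hfm : f ∈ LL 𝔽 v hv S hS m := (mem_LL m f).mpr ⟨hfA, hfb⟩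
      rw [heq] at hfm
      have h2 := ((mem_LL _ f).mp hfm).2 i
      have hi : ((m - Pi.single i 1 : Fin 2 → ℤ)) i = m i - 1 := by
        simp [Pi.sub_apply]
      rw [hi, hfv] at h2
      have h3 : -(m i - 1) ≤ -(m i) := by exact_mod_cast h2
      omega
  constructor
  · rintro ⟨hgap, hL⟩
    have h0 : m₁ ∉ GammaP v S 0 := by
      rintro ⟨f, hf0, hfA, hfv, hfj⟩
      refine (key 0).mpr (hL 0) ⟨f, hf0, hfA, by rw [hm0]; exact hfv,
        Fin.forall_fin_two.mpr ⟨?_, ?_⟩⟩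
      · rw [hm0, hfv]
      · rw [hm1]
        refine le_trans ?_ (hfj 1 (by decide))
        exact_mod_cast (by omega : -(m₂ : ℤ) ≤ 0)
    have h1 : m₂ ∉ GammaP v S 1 := by
      rintro ⟨f, hf0, hfA, hfv, hfj⟩
      refine (key 1).mpr (hL 1) ⟨f, hf0, hfA, by rw [hm1]; exact hfv,
        Fin.forall_fin_two.mpr ⟨?_, ?_⟩⟩
      · rw [hm0]
        refine le_trans ?_ (hfj 0 (by decide))
        exact_mod_cast (by omega : -(m₁ : ℤ) ≤ 0)
      · rw [hm1, hfv]
    have hb : m₂ < β m₁ := by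
      by_contra hc
      push_neg at hc
      obtain ⟨⟨hβ1, f, hf0, hfA, hfv⟩, -⟩ := hβ m₁ h0
      have hv0 : v 0 f = ((-(m₁ : ℤ) : ℤ) : WithTop ℤ) := by simpa using hfv 0
      have hv1 : v 1 f = ((-(β m₁ : ℤ) : ℤ) : WithTop ℤ) := by simpa using hfv 1
      refine (key 0).mpr (hL 0) ⟨f, hf0, hfA, by rw [hm0]; exact hv0,
        Fin.forall_fin_two.mpr ⟨?_, ?_⟩⟩
      · rw [hm0, hv0]
      · rw [hm1, hv1]
        exact_mod_cast (by omega : -(m₂ : ℤ) ≤ -(β m₁ : ℤ))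
    have ha : m₁ < α m₂ := by
      by_contra hc
      push_neg at hc
      obtain ⟨⟨hα1, f, hf0, hfA, hfv⟩, -⟩ := hα m₂ h1
      have hv0 : v 0 f = ((-(α m₂ : ℤ) : ℤ) : WithTop ℤ) := by simpa using hfv 0
      have hv1 : v 1 f = ((-(m₂ : ℤ) : ℤ) : WithTop ℤ) := by simpa using hfv 1
      refine (key 1).mpr (hL 1) ⟨f, hf0, hfA, by rw [hm1]; exact hv1,
        Fin.forall_fin_two.mpr ⟨?_, ?_⟩⟩
      · rw [hm0, hv0]
        exact_mod_cast (by omega : -(m₁ : ℤ) ≤ -(α m₂ : ℤ))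
      · rw [hm1, hv1]
    exact ⟨h0, h1, hb, ha⟩
  · rintro ⟨h0, h1, hb, ha⟩
    have C0 : ¬ ∃ f : K, f ≠ 0 ∧ f ∈ regA S ∧ v 0 f = ((-(m 0) : ℤ) : WithTop ℤ) ∧
        ∀ j, ((-(m j) : ℤ) : WithTop ℤ) ≤ v j f := by
      rintro ⟨f, hf0, hfA, hfv, hfb⟩
      obtain ⟨t, ht⟩ := hint 1 f hf0
      have htm : -(m₂ : ℤ) ≤ t := by
        have := hfb 1; rw [ht, hm1] at this; exact_mod_cast this
      rcases le_or_gt 0 t with hpos | hneg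
      · refine h0 ⟨f, hf0, hfA, by rw [← hm0]; exact hfv,
          Fin.forall_fin_two.mpr ⟨fun hj => absurd rfl hj, fun _ => ?_⟩⟩
        rw [ht]; exact_mod_cast hpos
      · set n := (-t).toNat with hn
        have hn' : (n : ℤ) = -t := Int.toNat_of_nonneg (by omega)
        have hmem : ![m₁, n] ∈ Gamma v S := by
          refine ⟨f, hf0, hfA, Fin.forall_fin_two.mpr ⟨?_, ?_⟩⟩
          · rw [show ((![m₁, n] 0 : ℕ) : ℤ) = (m₁ : ℤ) by simp, ← hm0]; exact hfv
          · rw [show ((![m₁, n] 1 : ℕ) : ℤ) = (n : ℤ) by simp, ht]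
            exact_mod_cast congrArg (fun x : ℤ => ((x : WithTop ℤ))) (by omega : t = -(n : ℤ))
        have hle := (hβ m₁ h0).2 ⟨by omega, hmem⟩
        omega
    have C1 : ¬ ∃ f : K, f ≠ 0 ∧ f ∈ regA S ∧ v 1 f = ((-(m 1) : ℤ) : WithTop ℤ) ∧
        ∀ j, ((-(m j) : ℤ) : WithTop ℤ) ≤ v j f := by
      rintro ⟨f, hf0, hfA, hfv, hfb⟩
      obtain ⟨t, ht⟩ := hint 0 f hf0
      have htm : -(m₁ : ℤ) ≤ t := by
        have := hfb 0; rw [ht, hm0] at this; exact_mod_cast this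
      rcases le_or_gt 0 t with hpos | hneg
      · refine h1 ⟨f, hf0, hfA, by rw [← hm1]; exact hfv,
          Fin.forall_fin_two.mpr ⟨fun _ => ?_, fun hj => absurd rfl hj⟩⟩
        rw [ht]; exact_mod_cast hpos
      · set n := (-t).toNat with hn
        have hn' : (n : ℤ) = -t := Int.toNat_of_nonneg (by omega)
        have hmem : ![n, m₂] ∈ Gamma v S := by
          refine ⟨f, hf0, hfA, Fin.forall_fin_two.mpr ⟨?_, ?_⟩⟩
          · rw [show ((![n, m₂] 0 : ℕ) : ℤ) = (n : ℤ) by simp, ht]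
            exact_mod_cast congrArg (fun x : ℤ => ((x : WithTop ℤ))) (by omega : t = -(n : ℤ))
          · rw [show ((![n, m₂] 1 : ℕ) : ℤ) = (m₂ : ℤ) by simp, ← hm1]; exact hfv
        have hle := (hα m₂ h1).2 ⟨by omega, hmem⟩
        omega
    refine ⟨?_, fun i => ?_⟩
    · rintro ⟨f, hf0, hfA, hfv⟩
      have e0 : v 0 f = ((-(m₁ : ℤ) : ℤ) : WithTop ℤ) := by simpa using hfv 0
      have e1 : v 1 f = ((-(m₂ : ℤ) : ℤ) : WithTop ℤ) := by simpa using hfv 1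
      refine C0 ⟨f, hf0, hfA, by rw [hm0]; exact e0,
        Fin.forall_fin_two.mpr ⟨?_, ?_⟩⟩
      · rw [hm0]; exact le_of_eq e0.symm
      · rw [hm1]; exact le_of_eq e1.symm
    · fin_cases i
      · exact (key 0).mp C0
      · exact (key 1).mp C1
end
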